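/- arXiv:0903.3663 — 6 statements merged into one kernel-verified Lean document; each statement's English description precedes it below -/
import Mathlib

section
/- Let T be the n×n matrix with entries T_{jk} = 1 + sgn(j−k). For index sets I = {i_1 < … < i_k} and J = {j_1 < … < j_k} ⊆ {1,…,n}, the minor det T_{JI} (rows J, columns I) equals 2^{p(I,J)} if I interlaces with J (meaning i_1 ≤ j_1 ≤ i_2 ≤ j_2 ≤ … ≤ i_k ≤ j_k), and equals 0 otherwise, where p(I,J) = |I \ (I ∩ J)|. -/
/-!
Induction on `k`, looking at the first row `j₁` of the minor. If `j₁ < i₁` that row vanishes, and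
if `i_b < j₁` for some `b > 1` the columns `1` and `b` both consist of `2`s; in both cases `I` does
not interlace `J`. Otherwise the first row is `(1, 0, …, 0)` when `i₁ = j₁` and `(2, 0, …, 0)` when
`i₁ < j₁ < i₂`, while for `i₁ < j₁ = i₂` subtracting column `2` from column `1` turns the latter
into `(1, 0, …, 0)ᵀ`. So the minor is `1` or `2` times the minor of the tails, and `p` grows by one
exactly in the middle case: in the last one, `i₁ ∉ J` but `i₂` is matched in `I, J` and unmatched
in the tails.
-/

open Matrix

/-- The lower triangular matrix with `T j k = 1 + sgn (j - k)`. -/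
def lowerT (n : ℕ) (R : Type*) [CommRing R] : Matrix (Fin n) (Fin n) R :=
  fun j k => if j = k then 1 else if k < j then 2 else 0

/-- `I` interlaces with `J`: `i₁ ≤ j₁ ≤ i₂ ≤ j₂ ≤ … ≤ i_k ≤ j_k`. -/
def Interlaces {n k : ℕ} (I J : Finset (Fin n)) (hI : I.card = k) (hJ : J.card = k) : Prop :=
  (∀ m : Fin k, I.orderEmbOfFin hI m ≤ J.orderEmbOfFin hJ m) ∧
  (∀ m : Fin k, ∀ h : (m : ℕ) + 1 < k,
    J.orderEmbOfFin hJ m ≤ I.orderEmbOfFin hI ⟨(m : ℕ) + 1, h⟩)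

open Finset

section

variable {α : Type*} {k : ℕ}

theorem Fin.image_univ_succ [DecidableEq α] (f : Fin (k + 1) → α) :
    univ.image f = insert (f 0) (univ.image (f ∘ Fin.succ)) := by
  rw [Fin.univ_succ, cons_eq_insert, image_insert, map_eq_image, image_image]
  rfl

-- All pairs `a < b` rather than consecutive indices, so that the condition splits into head and
-- tail without any monotonicity.
def IsInterlacing [Preorder α] (i j : Fin k → α) : Prop :=
  (∀ m, i m ≤ j m) ∧ ∀ a b, a < b → j a ≤ i b

theorem isInterlacing_succ_iff [Preorder α] {i j : Fin (k + 1) → α} :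
    IsInterlacing i j ↔
      i 0 ≤ j 0 ∧ (∀ b : Fin k, j 0 ≤ i b.succ) ∧ IsInterlacing (i ∘ Fin.succ) (j ∘ Fin.succ) := by
  simp only [IsInterlacing, Fin.forall_fin_succ, Fin.succ_lt_succ_iff, Fin.succ_pos,
    Fin.not_lt_zero, Function.comp_apply, IsEmpty.forall_iff, forall_const, true_and]
  tauto

end

theorem interlaces_iff_isInterlacing {n k : ℕ} (I J : Finset (Fin n)) (hI : I.card = k)
    (hJ : J.card = k) :
    Interlaces I J hI hJ ↔ IsInterlacing (I.orderEmbOfFin hI) (J.orderEmbOfFin hJ) := by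
  refine and_congr_right fun _ => ⟨fun h a b hab => ?_, fun h m hm => h _ _ ?_⟩
  · exact (h a (by omega)).trans ((I.orderEmbOfFin hI).monotone (Fin.mk_le_of_le_val hab))
  · exact Fin.lt_def.2 (Nat.lt_succ_self _)

namespace Matrix

variable {R : Type*} [CommRing R] {k : ℕ}

theorem det_succ_eq_of_row_zero {A : Matrix (Fin (k + 1)) (Fin (k + 1)) R}
    (h : ∀ b : Fin k, A 0 b.succ = 0) : det A = A 0 0 * det (A.submatrix Fin.succ Fin.succ) := by
  simp [det_succ_row_zero A, Fin.sum_univ_succ, h]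

theorem det_succ_eq_of_column_zero {A : Matrix (Fin (k + 1)) (Fin (k + 1)) R}
    (h : ∀ a : Fin k, A a.succ 0 = 0) : det A = A 0 0 * det (A.submatrix Fin.succ Fin.succ) := by
  simp [det_succ_column_zero A, Fin.sum_univ_succ, h]

end Matrix

section lowerT

variable {n : ℕ} {R : Type*} [CommRing R]

theorem lowerT_apply_self (x : Fin n) : lowerT n R x x = 1 := if_pos rfl

theorem lowerT_apply_of_gt {x y : Fin n} (h : y < x) : lowerT n R x y = 2 := by
  simp [lowerT, h, h.ne']

theorem lowerT_apply_of_lt {x y : Fin n} (h : x < y) : lowerT n R x y = 0 := by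
  simp [lowerT, h.ne, h.not_gt]

variable {k : ℕ} {i j : Fin (k + 1) → Fin n}

theorem det_submatrix_lowerT_eq_zero_of_lt (hi : Monotone i) (h : j 0 < i 0) :
    det ((lowerT n R).submatrix j i) = 0 :=
  det_eq_zero_of_row_eq_zero 0 fun b =>
    lowerT_apply_of_lt (h.trans_le (hi (Fin.zero_le b)))

theorem det_submatrix_lowerT_eq_zero_of_gt (hi : Monotone i) (hj : Monotone j) {b : Fin k}
    (h : i b.succ < j 0) : det ((lowerT n R).submatrix j i) = 0 := by
  refine det_zero_of_column_eq (Fin.succ_ne_zero b).symm fun a => ?_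
  have hja : i b.succ < j a := h.trans_le (hj (Fin.zero_le a))
  simp only [submatrix_apply, lowerT_apply_of_gt hja,
    lowerT_apply_of_gt ((hi (Fin.zero_le _)).trans_lt hja)]

theorem det_submatrix_lowerT_succ_of_eq (hi : StrictMono i) (h : i 0 = j 0) :
    det ((lowerT n R).submatrix j i) =
      det ((lowerT n R).submatrix (j ∘ Fin.succ) (i ∘ Fin.succ)) := by
  rw [det_succ_eq_of_row_zero (A := (lowerT n R).submatrix j i)
    fun b => lowerT_apply_of_lt (h ▸ hi (Fin.succ_pos b))]
  simp [h, lowerT_apply_self]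

theorem det_submatrix_lowerT_succ_of_lt_of_lt (h₀ : i 0 < j 0) (h₁ : ∀ b : Fin k, j 0 < i b.succ) :
    det ((lowerT n R).submatrix j i) =
      2 * det ((lowerT n R).submatrix (j ∘ Fin.succ) (i ∘ Fin.succ)) := by
  rw [det_succ_eq_of_row_zero (A := (lowerT n R).submatrix j i)
    fun b => lowerT_apply_of_lt (h₁ b)]
  simp [lowerT_apply_of_gt h₀]

theorem det_submatrix_lowerT_succ_of_lt_of_eq (hj : StrictMono j) (h₀ : i 0 < j 0) {b : Fin k}
    (h₁ : i b.succ = j 0) :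
    det ((lowerT n R).submatrix j i) =
      det ((lowerT n R).submatrix (j ∘ Fin.succ) (i ∘ Fin.succ)) := by
  set M := (lowerT n R).submatrix j i
  rw [← det_updateCol_add_smul_self M (Fin.succ_ne_zero b).symm (-1),
    det_succ_eq_of_column_zero fun a => ?_]
  · have h00 : M 0 0 + (-1 : R) • M 0 b.succ = 1 := by
      simp [M, lowerT_apply_of_gt h₀, h₁, lowerT_apply_self]
      norm_num
    rw [updateCol_self, h00, one_mul, ← Fin.succAbove_zero, submatrix_updateCol_succAbove]
    rfl
  · have h := hj (Fin.succ_pos a)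
    simp [M, lowerT_apply_of_gt (h₀.trans h), lowerT_apply_of_gt (h₁ ▸ h)]

theorem exists_det_submatrix_lowerT_succ (hi : StrictMono i) (hj : StrictMono j)
    (h₀ : i 0 ≤ j 0) (h₁ : ∀ b : Fin k, j 0 ≤ i b.succ) :
    ∃ e, #(univ.image i \ univ.image j) =
        e + #(univ.image (i ∘ Fin.succ) \ univ.image (j ∘ Fin.succ)) ∧
      det ((lowerT n R).submatrix j i) =
        2 ^ e * det ((lowerT n R).submatrix (j ∘ Fin.succ) (i ∘ Fin.succ)) := by
  rw [Fin.image_univ_succ i, Fin.image_univ_succ j]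
  set S := univ.image (i ∘ Fin.succ)
  set T := univ.image (j ∘ Fin.succ)
  have hiS : i 0 ∉ S := by simpa [S] using fun b => (hi (Fin.succ_pos b)).ne'
  have hjT : j 0 ∉ T := by simpa [T] using fun b => (hj (Fin.succ_pos b)).ne'
  have hiT : i 0 ∉ T := by
    simpa [T] using fun b => (h₀.trans_lt (hj (Fin.succ_pos b))).ne'
  rcases h₀.eq_or_lt with h₀ | h₀
  · refine ⟨0, ?_, by rw [pow_zero, one_mul, det_submatrix_lowerT_succ_of_eq hi h₀]⟩
    rw [← h₀, insert_sdiff_insert, sdiff_insert_of_notMem hiS, zero_add]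
  have hsdiff : insert (i 0) S \ insert (j 0) T = insert (i 0) ((S \ T).erase (j 0)) := by
    rw [insert_sdiff_of_notMem _ (by simp [h₀.ne, hiT]), sdiff_insert]
  by_cases hb : ∃ b : Fin k, i b.succ = j 0
  · obtain ⟨b, hb⟩ := hb
    refine ⟨0, ?_, by rw [pow_zero, one_mul, det_submatrix_lowerT_succ_of_lt_of_eq hj h₀ hb]⟩
    have hjS : j 0 ∈ S \ T := mem_sdiff.2 ⟨hb ▸ mem_image_of_mem _ (mem_univ b), hjT⟩
    rw [hsdiff, card_insert_of_notMem (by simp [hiS]), card_erase_add_one hjS, zero_add]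
  · push Not at hb
    have hjS : j 0 ∉ S := by simpa [S] using hb
    refine ⟨1, ?_, by
      rw [pow_one, det_submatrix_lowerT_succ_of_lt_of_lt h₀ fun b => (h₁ b).lt_of_ne (hb b).symm]⟩
    rw [hsdiff, erase_eq_of_notMem (by simp [hjS]), card_insert_of_notMem (by simp [hiS]), add_comm]

end lowerT

open Classical in
theorem det_submatrix_lowerT {R : Type*} [CommRing R] {n k : ℕ} {i j : Fin k → Fin n}
    (hi : StrictMono i) (hj : StrictMono j) :
    det ((lowerT n R).submatrix j i) =
      if IsInterlacing i j then 2 ^ #(univ.image i \ univ.image j) else 0 := by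
  induction k with
  | zero => simp [IsInterlacing]
  | succ k ih =>
    rcases lt_or_ge (j 0) (i 0) with h₀ | h₀
    · rw [det_submatrix_lowerT_eq_zero_of_lt (R := R) hi.monotone h₀,
        if_neg fun h => h₀.not_ge (h.1 0)]
    by_cases h₁ : ∀ b : Fin k, j 0 ≤ i b.succ
    · obtain ⟨e, hcard, hdet⟩ := exists_det_submatrix_lowerT_succ (R := R) hi hj h₀ h₁
      rw [hdet, ih (hi.comp Fin.strictMono_succ) (hj.comp Fin.strictMono_succ),
        isInterlacing_succ_iff, hcard, pow_add]
      simp [h₀, h₁]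
    · push Not at h₁
      obtain ⟨b, hb⟩ := h₁
      rw [det_submatrix_lowerT_eq_zero_of_gt (R := R) hi.monotone hj.monotone hb,
        if_neg fun h => hb.not_ge ((isInterlacing_succ_iff.1 h).2.1 b)]

/-- Minors of `T`: `det T_{JI} = 2^{p(I,J)}` if `I ≤ J` (interlacing), `0` otherwise. -/
theorem minors_of_T (n k : ℕ) (I J : Finset (Fin n)) (hI : I.card = k) (hJ : J.card = k) :
    (Interlaces I J hI hJ →
      Matrix.det ((lowerT n ℝ).submatrix (J.orderEmbOfFin hJ) (I.orderEmbOfFin hI)) =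
        2 ^ (I \ (I ∩ J)).card) ∧
    (¬ Interlaces I J hI hJ →
      Matrix.det ((lowerT n ℝ).submatrix (J.orderEmbOfFin hJ) (I.orderEmbOfFin hI)) = 0) := by
  have h := det_submatrix_lowerT (R := ℝ) (I.orderEmbOfFin hI).strictMono
    (J.orderEmbOfFin hJ).strictMono
  rw [image_orderEmbOfFin_univ, image_orderEmbOfFin_univ, ← interlaces_iff_isInterlacing,
    ← sdiff_inter_self_left] at h
  exact ⟨fun hIJ => h.trans (if_pos hIJ), fun hIJ => h.trans (if_neg hIJ)⟩
end

section
/- Let x_1 < x_2 < … < x_n be real numbers and E the n×n matrix with E_{jk} = exp(−|x_j − x_k|). For k-element subsets I = {i_1<…<i_k}, J = {j_1<…<j_k} of {1,…,n}, set α_m = min(i_m, j_m) and β_m = max(i_m, j_m). If (i_1,j_1) < (i_2,j_2) < … < (i_k,j_k) (meaning both entries of each pair are strictly less than both entries of the next pair), then det E_{IJ} = (∏_{m=1}^{k−1} (1 − E_{β_m α_{m+1}}²)) · ∏_{m=1}^{k} E_{α_m β_m}; otherwise det E_{IJ} = 0. -/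
/-!
Since `exp (-|s - t|) = exp (-s) * exp (-t) * min (exp (2 s)) (exp (2 t))`, the minor is, up to
diagonal factors, the determinant of a matrix `min (u p) (v l)`. When the pairs interlace, one
pivot step of Gaussian elimination turns `min (u p) (v l) - c` into
`min (u (p + 1)) (v (l + 1)) - max (u 0) (v 0)`, and induction gives the product formula.
When they fail to interlace at step `m`, say `i (m + 1) ≤ j m`, the rows `p ≤ m + 1` restricted
to the columns `l ≥ m` form the rank-one block `exp (x (i p)) * exp (-x (j l))`, so these `m + 2`
rows lie in a space of dimension `m + 1` and the determinant vanishes.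
-/

open Matrix

/-- The matrix `E j k = exp (-|x j - x k|)`. -/
noncomputable def Ematrix (n : ℕ) (x : Fin n → ℝ) : Matrix (Fin n) (Fin n) ℝ :=
  fun j k => Real.exp (-|x j - x k|)

namespace Matrix

variable {K : Type*} [Field K]

theorem det_succ_eq_mul_det_schur {k : ℕ} (M : Matrix (Fin (k + 1)) (Fin (k + 1)) K)
    (h : M 0 0 ≠ 0) :
    M.det =
      M 0 0 * (of fun p l : Fin k => M p.succ l.succ - M p.succ 0 / M 0 0 * M 0 l.succ).det := by
  set B : Matrix (Fin (k + 1)) (Fin (k + 1)) K :=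
    of fun p l => M p l + Fin.cases 0 (fun p => -(M p.succ 0 / M 0 0)) p * M 0 l
  have hB : B.det = M.det := det_eq_of_forall_row_eq_smul_add_const _ 0 rfl fun _ _ => rfl
  have hcol : ∀ p : Fin k, B p.succ 0 = 0 := fun p => by
    simp [B, div_mul_cancel₀ _ h]
  have hschur : B.submatrix Fin.succ Fin.succ =
      of fun p l : Fin k => M p.succ l.succ - M p.succ 0 / M 0 0 * M 0 l.succ := by
    ext p l
    simp [B, sub_eq_add_neg]
  rw [← hB, det_succ_column_zero, Fin.sum_univ_succ]
  simp only [hcol, mul_zero, zero_mul, Finset.sum_const_zero, add_zero, Fin.succAbove_zero, hschur]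
  simp [B]

theorem det_eq_zero_of_rankOne_block {ι : Type*} [Fintype ι] [DecidableEq ι]
    (M : Matrix ι ι K) (S T : Finset ι) (c g : ι → K)
    (hM : ∀ p ∈ S, ∀ l ∉ T, M p l = c p * g l) (hcard : T.card + 1 < S.card) :
    M.det = 0 := by
  let L : (ι → K) →ₗ[K] K × (T → K) × ((Sᶜ : Finset ι) → K) :=
    (Fintype.linearCombination K c).prod
      ((LinearMap.funLeft K K ((↑) : T → ι) ∘ₗ M.vecMulLinear).prod
        (LinearMap.funLeft K K ((↑) : (Sᶜ : Finset ι) → ι)))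
  have hdim : Module.finrank K (K × (T → K) × ((Sᶜ : Finset ι) → K)) <
      Module.finrank K (ι → K) := by
    simp only [Module.finrank_prod, Module.finrank_fintype_fun_eq_card, Fintype.card_coe,
      Finset.card_compl, Module.finrank_self]
    have := S.card_le_univ
    omega
  obtain ⟨v, hv, hv0⟩ := Submodule.exists_mem_ne_zero_of_ne_bot (L.ker_ne_bot_of_finrank_lt hdim)
  rw [LinearMap.mem_ker] at hv
  have hvc : ∑ p, v p * c p = 0 := by
    simpa [L, Fintype.linearCombination_apply] using congrArg Prod.fst hv
  have hvT : ∀ l ∈ T, (v ᵥ* M) l = 0 := fun l hl => by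
    simpa [L] using congrFun (congrArg (fun w => w.2.1) hv) ⟨l, hl⟩
  have hvS : ∀ p ∉ S, v p = 0 := fun p hp => by
    simpa [L] using congrFun (congrArg (fun w => w.2.2) hv) ⟨p, Finset.mem_compl.mpr hp⟩
  refine exists_vecMul_eq_zero_iff.mp ⟨v, hv0, funext fun l => ?_⟩
  by_cases hl : l ∈ T
  · exact hvT l hl
  calc (v ᵥ* M) l = ∑ p, v p * M p l := rfl
    _ = ∑ p, v p * c p * g l := by
        refine Finset.sum_congr rfl fun p _ => ?_
        by_cases hp : p ∈ S
        · rw [hM p hp l hl, mul_assoc]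
        · simp [hvS p hp]
    _ = 0 := by rw [← Finset.sum_mul, hvc, zero_mul]

variable {R : Type*} [Field R] [LinearOrder R]

theorem det_min_sub_of_interlaced {k : ℕ} (u v : Fin (k + 1) → R) (c : R)
    (hc : c < min (u 0) (v 0))
    (huv : ∀ p q, p < q → max (u p) (v p) < min (u q) (v q)) :
    (of fun p l => min (u p) (v l) - c).det =
      (min (u 0) (v 0) - c) *
        ∏ i : Fin k, (min (u i.succ) (v i.succ) - max (u i.castSucc) (v i.castSucc)) := by
  induction k generalizing c with
  | zero => simp
  | succ k ih =>
    have hpivot : min (u 0) (v 0) - c ≠ 0 := sub_ne_zero.mpr hc.ne'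
    have hrow (l : Fin (k + 1)) : min (u 0) (v l.succ) = u 0 :=
      min_eq_left ((le_max_left _ _).trans ((huv 0 l.succ l.succ_pos).le.trans (min_le_right _ _)))
    have hcol (p : Fin (k + 1)) : min (u p.succ) (v 0) = v 0 :=
      min_eq_right ((le_max_right _ _).trans ((huv 0 p.succ p.succ_pos).le.trans (min_le_left _ _)))
    have hquot : (v 0 - c) / (min (u 0) (v 0) - c) * (u 0 - c) = max (u 0) (v 0) - c := by
      rw [div_mul_eq_mul_div, div_eq_iff hpivot]
      rcases le_total (u 0) (v 0) with h | h
      · rw [min_eq_left h, max_eq_right h]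
      · rw [min_eq_right h, max_eq_left h, mul_comm]
    set A : Matrix (Fin (k + 2)) (Fin (k + 2)) R := of fun p l => min (u p) (v l) - c
    have hschur : (of fun p l : Fin (k + 1) =>
        A p.succ l.succ - A p.succ 0 / A 0 0 * A 0 l.succ) =
        of fun p l => min (u p.succ) (v l.succ) - max (u 0) (v 0) := by
      ext p l
      simp only [A, of_apply, hrow, hcol, hquot]
      ring
    rw [det_succ_eq_mul_det_schur A hpivot, hschur,
      ih (fun p => u p.succ) (fun p => v p.succ) _ (huv 0 1 Fin.zero_lt_one)
        fun p q h => huv p.succ q.succ (Fin.succ_lt_succ_iff.mpr h),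
      Fin.prod_univ_succ (n := k)]
    simp [A]

end Matrix

open Real

theorem exp_neg_abs_sub (s t : ℝ) :
    exp (-|s - t|) = exp (-s) * exp (-t) * exp (2 * min s t) := by
  rw [← exp_add, ← exp_add]
  congr 1
  rcases le_total s t with h | h
  · rw [abs_of_nonpos (sub_nonpos.mpr h), min_eq_left h]; ring
  · rw [abs_of_nonneg (sub_nonneg.mpr h), min_eq_right h]; ring

theorem det_exp_neg_abs_sub_of_interlaced {k : ℕ} (a b : Fin (k + 1) → ℝ)
    (hab : ∀ p q, p < q → max (a p) (b p) < min (a q) (b q)) :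
    (of fun p l => exp (-|a p - b l|)).det =
      (∏ i : Fin k,
        (1 - exp (-|max (a i.castSucc) (b i.castSucc) - min (a i.succ) (b i.succ)|) ^ 2)) *
      ∏ p, exp (-|a p - b p|) := by
  set f : ℝ → ℝ := fun s => exp (2 * s)
  have hf : StrictMono f := fun s t h => exp_lt_exp.mpr (by linarith)
  set μ : Fin (k + 1) → ℝ := fun p => min (a p) (b p)
  set ν : Fin (k + 1) → ℝ := fun p => max (a p) (b p)
  have hmin (p : Fin (k + 1)) : min (f (a p)) (f (b p)) = f (μ p) := (hf.monotone.map_min).symm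
  have hmax (p : Fin (k + 1)) : max (f (a p)) (f (b p)) = f (ν p) := (hf.monotone.map_max).symm
  have hfactor : (of fun p l => exp (-|a p - b l|)) =
      diagonal (fun p => exp (-a p)) * (of fun p l => min (f (a p)) (f (b l)) - 0) *
        diagonal (fun l => exp (-b l)) := by
    ext p l
    simp only [mul_diagonal, diagonal_mul, of_apply, sub_zero, exp_neg_abs_sub,
      ← hf.monotone.map_min, f]
    ring
  have hgap (i : Fin k) : f (μ i.succ) - f (ν i.castSucc) =
      (1 - exp (-|ν i.castSucc - μ i.succ|) ^ 2) * f (μ i.succ) := by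
    have hlt := hab i.castSucc i.succ Fin.castSucc_lt_succ
    rw [abs_of_neg (sub_neg.mpr hlt), neg_neg, ← exp_nat_mul, sub_mul, one_mul, ← exp_add]
    simp only [f]
    congr 2
    push_cast
    ring
  calc (of fun p l => exp (-|a p - b l|)).det
      = (∏ p, exp (-a p)) * (∏ p, exp (-b p)) *
          (f (μ 0) * ∏ i : Fin k, (f (μ i.succ) - f (ν i.castSucc))) := by
        rw [hfactor, det_mul, det_mul, det_diagonal, det_diagonal,
          det_min_sub_of_interlaced _ _ 0 (lt_min (exp_pos _) (exp_pos _)), hmin]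
        · simp only [hmin, hmax, sub_zero]
          ring
        · intro p q hpq
          rw [hmin, hmax]
          exact hf (hab p q hpq)
    _ = (∏ i : Fin k, (1 - exp (-|ν i.castSucc - μ i.succ|) ^ 2)) *
          ∏ p, exp (-a p) * exp (-b p) * f (μ p) := by
        simp only [hgap, Finset.prod_mul_distrib, Fin.prod_univ_succ (fun p => f (μ p))]
        ring
    _ = _ := by simp only [exp_neg_abs_sub, μ, ν, f]

theorem det_exp_neg_abs_sub_eq_zero_of_le {k : ℕ} (a b : Fin k → ℝ) (ha : Monotone a)
    (hb : Monotone b) {p q : Fin k} (hpq : p < q) (h : a q ≤ b p) :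
    (of fun r l => exp (-|a r - b l|)).det = 0 := by
  refine det_eq_zero_of_rankOne_block _ (Finset.Iic q) (Finset.Iio p) (fun r => exp (a r))
    (fun l => exp (-b l)) (fun r hr l hl => ?_) ?_
  · have hrl : a r ≤ b l :=
      (ha (Finset.mem_Iic.mp hr)).trans (h.trans (hb (not_lt.mp (mt Finset.mem_Iio.mpr hl))))
    rw [of_apply, abs_of_nonpos (sub_nonpos.mpr hrl), neg_neg, sub_eq_add_neg, exp_add]
  · rw [Fin.card_Iic, Fin.card_Iio]
    exact Nat.add_lt_add_right hpq 1

theorem det_exp_neg_abs_sub_eq_zero {k : ℕ} (a b : Fin k → ℝ) (ha : StrictMono a)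
    (hb : StrictMono b) {p q : Fin k} (hpq : p < q) (h : min (a q) (b q) ≤ max (a p) (b p)) :
    (of fun r l => exp (-|a r - b l|)).det = 0 := by
  rcases min_le_iff.mp h with h | h <;> rcases le_max_iff.mp h with h | h
  · exact absurd h (not_le.mpr (ha hpq))
  · exact det_exp_neg_abs_sub_eq_zero_of_le a b ha.monotone hb.monotone hpq h
  · rw [← det_transpose]
    convert det_exp_neg_abs_sub_eq_zero_of_le b a hb.monotone ha.monotone hpq h using 3
    ext r l
    rw [transpose_apply, of_apply, of_apply, abs_sub_comm]
  · exact absurd h (not_le.mpr (hb hpq))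

theorem interlaced_of_forall_castSucc_succ {α : Type*} [LinearOrder α] {k : ℕ}
    (a b : Fin (k + 1) → α)
    (h : ∀ i : Fin k, max (a i.castSucc) (b i.castSucc) < min (a i.succ) (b i.succ)) :
    ∀ p q, p < q → max (a p) (b p) < min (a q) (b q) := by
  have hmin : StrictMono fun p => min (a p) (b p) :=
    Fin.strictMono_iff_lt_succ.mpr fun i => min_le_max.trans_lt (h i)
  intro p q hpq
  obtain ⟨j, rfl⟩ := Fin.exists_castSucc_eq.mpr (Fin.ne_last_of_lt hpq)
  exact (h j).trans_le (hmin.monotone (Fin.castSucc_lt_iff_succ_le.mp hpq))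

theorem Fin.prod_dite_val_add_one_lt {M : Type*} [CommMonoid M] {k : ℕ}
    (f : ∀ m : Fin (k + 1), (m : ℕ) + 1 < k + 1 → M) :
    (∏ m : Fin (k + 1), if h : (m : ℕ) + 1 < k + 1 then f m h else 1) =
      ∏ i : Fin k, f i.castSucc (by simp) := by
  rw [Fin.prod_univ_castSucc, dif_neg (by simp), mul_one]
  exact Finset.prod_congr rfl fun i _ => dif_pos _

/-- Minors of the matrix `E_{jk} = e^{-|x_j - x_k|}` for `x_1 < … < x_n`:
if the pairs `(i_m, j_m)` are strictly increasing (both entries of each pair less than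
both entries of the next), then
`det E_{IJ} = ∏ (1 - E_{β_m α_{m+1}}²) ∏ E_{α_m β_m}`; otherwise `det E_{IJ} = 0`. -/
theorem minors_of_E (n k : ℕ) (x : Fin n → ℝ) (hx : StrictMono x)
    (I J : Finset (Fin n)) (hI : I.card = k) (hJ : J.card = k) :
    (let iE := I.orderEmbOfFin hI
     let jE := J.orderEmbOfFin hJ
     let E := Ematrix n x
     let α : Fin k → Fin n := fun m => min (iE m) (jE m)
     let β : Fin k → Fin n := fun m => max (iE m) (jE m)
     ((∀ m : Fin k, ∀ h : (m : ℕ) + 1 < k, β m < α ⟨(m : ℕ) + 1, h⟩) →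
        Matrix.det (E.submatrix iE jE) =
          (∏ m : Fin k, if h : (m : ℕ) + 1 < k then
              1 - (E (β m) (α ⟨(m : ℕ) + 1, h⟩)) ^ 2 else 1) *
          ∏ m : Fin k, E (α m) (β m)) ∧
     (¬ (∀ m : Fin k, ∀ h : (m : ℕ) + 1 < k, β m < α ⟨(m : ℕ) + 1, h⟩) →
        Matrix.det (E.submatrix iE jE) = 0)) := by
  cases k with
  | zero => simp
  | succ k => ?_
  intro iE jE E α β
  set a : Fin (k + 1) → ℝ := fun p => x (iE p)
  set b : Fin (k + 1) → ℝ := fun p => x (jE p)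
  have hsub : E.submatrix iE jE = of fun p l => exp (-|a p - b l|) := rfl
  have hxα (m : Fin (k + 1)) : x (α m) = min (a m) (b m) := hx.monotone.map_min
  have hxβ (m : Fin (k + 1)) : x (β m) = max (a m) (b m) := hx.monotone.map_max
  refine ⟨fun hcond => ?_, fun hcond => ?_⟩
  · have hab (i : Fin k) : max (a i.castSucc) (b i.castSucc) < min (a i.succ) (b i.succ) := by
      rw [← hxα, ← hxβ]
      exact hx (hcond i.castSucc (by simp))
    rw [hsub, det_exp_neg_abs_sub_of_interlaced a b (interlaced_of_forall_castSucc_succ a b hab)]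
    congr 1
    · rw [Fin.prod_dite_val_add_one_lt]
      refine Finset.prod_congr rfl fun i _ => ?_
      change _ = 1 - exp (-|x (β i.castSucc) - x (α i.succ)|) ^ 2
      rw [hxα, hxβ]
    · refine Finset.prod_congr rfl fun i _ => ?_
      change _ = exp (-|x (α i) - x (β i)|)
      rw [hxα, hxβ, abs_sub_comm (min _ _), abs_of_nonneg (sub_nonneg.mpr min_le_max),
        max_sub_min_eq_abs']
  · push Not at hcond
    obtain ⟨m, hm, hle⟩ := hcond
    rw [hsub]
    refine det_exp_neg_abs_sub_eq_zero a b (hx.comp iE.strictMono) (hx.comp jE.strictMono)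
      (show m < ⟨m + 1, hm⟩ from Nat.lt_succ_self _) ?_
    rw [← hxα, ← hxβ]
    exact hx.monotone hle
end

section
/- Let ψ, χ : {1,…,n} → ℝ and let X be the n×n single-pair matrix with X_{ij} = ψ_{min(i,j)} χ_{max(i,j)}. For k-element subsets I, J of {1,…,n} with elements i_1<…<i_k and j_1<…<j_k, if the pairs fail to satisfy max(i_m,j_m) < min(i_{m+1},j_{m+1}) for all m, then det X_{IJ} = 0; if they do satisfy it, then det X_{IJ} = ψ_{α_1} · (∏_{m=1}^{k−1} (χ_{β_m} ψ_{α_{m+1}} − ψ_{β_m} χ_{α_{m+1}})) · χ_{β_k}, where α_m = min(i_m,j_m), β_m = max(i_m,j_m). -/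
open Matrix

open Finset


section Generic

variable {R : Type*} [CommRing R]

/-- expand along a column with a single nonzero entry -/
lemma det_col_single {n : ℕ} (A : Matrix (Fin (n+1)) (Fin (n+1)) R) (j i0 : Fin (n+1))
    (h : ∀ i, i ≠ i0 → A i j = 0) :
    det A = (-1)^((i0:ℕ)+(j:ℕ)) * A i0 j * det (A.submatrix i0.succAbove j.succAbove) := by
  rw [Matrix.det_succ_column A j, Finset.sum_eq_single i0]
  · intro b _ hb
    rw [h b hb]; ring
  · intro hb; exact absurd (Finset.mem_univ i0) hb

lemma det_row_single {n : ℕ} (A : Matrix (Fin (n+1)) (Fin (n+1)) R) (i j0 : Fin (n+1))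
    (h : ∀ j, j ≠ j0 → A i j = 0) :
    det A = (-1)^((i:ℕ)+(j0:ℕ)) * A i j0 * det (A.submatrix i.succAbove j0.succAbove) := by
  rw [Matrix.det_succ_row A i, Finset.sum_eq_single j0]
  · intro b _ hb
    rw [h b hb]; ring
  · intro hb; exact absurd (Finset.mem_univ j0) hb

lemma succAbove_coe {n : ℕ} (p : Fin (n+1)) (b : Fin n) :
    ((p.succAbove b) : ℕ) = if (b:ℕ) < (p:ℕ) then (b:ℕ) else (b:ℕ)+1 := by
  rw [Fin.succAbove]
  by_cases h : (b:ℕ) < (p:ℕ)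
  · rw [if_pos h, if_pos (by simpa [Fin.lt_def] using h)]
    simp
  · rw [if_neg h, if_neg (by simpa [Fin.lt_def] using h)]
    simp

/-- column operation `C_m ← C_m + c • C_last` making column `m` a single entry `-v`
at the bottom, then expansion. -/
lemma det_colop {m : ℕ} (A : Matrix (Fin (m+2)) (Fin (m+2)) R) (c v : R)
    (h0 : ∀ a : Fin (m+2), (a:ℕ) ≤ m → A a ⟨m, by omega⟩ + c * A a (Fin.last (m+1)) = 0)
    (hv : A (Fin.last (m+1)) ⟨m, by omega⟩ + c * A (Fin.last (m+1)) (Fin.last (m+1)) = -v) :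
    det A = v * det (A.submatrix Fin.castSucc (Fin.succAbove ⟨m, by omega⟩)) := by
  set jm : Fin (m+2) := ⟨m, by omega⟩ with hjm
  have hne : jm ≠ Fin.last (m+1) := by
    simp only [hjm, Fin.ne_iff_vne, Fin.val_last]; omega
  have e1 : det (A.updateCol jm (fun k => A k jm + c • A k (Fin.last (m+1)))) = det A :=
    det_updateCol_add_smul_self A hne c
  set A1 := A.updateCol jm (fun k => A k jm + c • A k (Fin.last (m+1))) with hA1
  have hsingle : ∀ i, i ≠ Fin.last (m+1) → A1 i jm = 0 := by
    intro i hi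
    have hi' : (i:ℕ) ≤ m := by
      have h2 := i.isLt
      have h3 : (i:ℕ) ≠ m+1 := fun h => hi (Fin.ext (by simp [h]))
      omega
    rw [hA1, Matrix.updateCol_self, smul_eq_mul]
    exact h0 i hi'
  rw [← e1, det_col_single A1 jm (Fin.last (m+1)) hsingle]
  have hval : A1 (Fin.last (m+1)) jm = -v := by
    rw [hA1, Matrix.updateCol_self, smul_eq_mul]; exact hv
  have hsub : A1.submatrix (Fin.last (m+1)).succAbove jm.succAbove
      = A.submatrix Fin.castSucc jm.succAbove := by
    ext a b
    simp only [Matrix.submatrix_apply, Fin.succAbove_last, hA1,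
      Matrix.updateCol_ne (Fin.succAbove_ne jm b)]
  rw [hval, hsub]
  have hsign : ((-1:R))^(((Fin.last (m+1)):ℕ) + (jm:ℕ)) = -1 := by
    have h4 : ((Fin.last (m+1)):ℕ) + (jm:ℕ) = 2*m+1 := by
      simp only [Fin.val_last, hjm]; omega
    rw [h4]; exact Odd.neg_one_pow ⟨m, by ring⟩
  rw [hsign]; ring

/-- row operation `R_m ← R_m + c • R_last` making row `m` a single entry `-v`
at the right, then expansion. -/
lemma det_rowop {m : ℕ} (A : Matrix (Fin (m+2)) (Fin (m+2)) R) (c v : R)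
    (h0 : ∀ b : Fin (m+2), (b:ℕ) ≤ m → A ⟨m, by omega⟩ b + c * A (Fin.last (m+1)) b = 0)
    (hv : A ⟨m, by omega⟩ (Fin.last (m+1)) + c * A (Fin.last (m+1)) (Fin.last (m+1)) = -v) :
    det A = v * det (A.submatrix (Fin.succAbove ⟨m, by omega⟩) Fin.castSucc) := by
  set jm : Fin (m+2) := ⟨m, by omega⟩ with hjm
  have hne : jm ≠ Fin.last (m+1) := by
    simp only [hjm, Fin.ne_iff_vne, Fin.val_last]; omega
  have e1 : det (A.updateRow jm (A jm + c • A (Fin.last (m+1)))) = det A :=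
    det_updateRow_add_smul_self A hne c
  set A1 := A.updateRow jm (A jm + c • A (Fin.last (m+1))) with hA1
  have hsingle : ∀ j, j ≠ Fin.last (m+1) → A1 jm j = 0 := by
    intro j hj
    have hj' : (j:ℕ) ≤ m := by
      have h2 := j.isLt
      have h3 : (j:ℕ) ≠ m+1 := fun h => hj (Fin.ext (by simp [h]))
      omega
    rw [hA1, Matrix.updateRow_self]
    simpa using h0 j hj'
  rw [← e1, det_row_single A1 jm (Fin.last (m+1)) hsingle]
  have hval : A1 jm (Fin.last (m+1)) = -v := by
    rw [hA1, Matrix.updateRow_self]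
    simpa using hv
  have hsub : A1.submatrix jm.succAbove (Fin.last (m+1)).succAbove
      = A.submatrix jm.succAbove Fin.castSucc := by
    ext a b
    simp only [Matrix.submatrix_apply, Fin.succAbove_last, hA1,
      Matrix.updateRow_ne (Fin.succAbove_ne jm a)]
  rw [hval, hsub]
  have hsign : ((-1:R))^((jm:ℕ) + ((Fin.last (m+1)):ℕ)) = -1 := by
    have h4 : (jm:ℕ) + ((Fin.last (m+1)):ℕ) = 2*m+1 := by
      simp only [Fin.val_last, hjm]; omega
    rw [h4]; exact Odd.neg_one_pow ⟨m, by ring⟩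
  rw [hsign]; ring

end Generic

section Generic2

variable {R : Type*} [CommRing R]

/-- scaled column operation `C_last ← d • C_last + c • C_m` making the last column a
single entry `v` at the bottom, then expansion. -/
lemma det_colop_scaled {m : ℕ} (A : Matrix (Fin (m+2)) (Fin (m+2)) R) (d c v : R)
    (h0 : ∀ a : Fin (m+2), (a:ℕ) ≤ m →
      d * A a (Fin.last (m+1)) + c * A a ⟨m, by omega⟩ = 0)
    (hv : d * A (Fin.last (m+1)) (Fin.last (m+1)) + c * A (Fin.last (m+1)) ⟨m, by omega⟩ = v) :
    d * det A = v * det (A.submatrix Fin.castSucc Fin.castSucc) := by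
  set jm : Fin (m+2) := ⟨m, by omega⟩ with hjm
  have hne : Fin.last (m+1) ≠ jm := by
    simp only [hjm, Fin.ne_iff_vne, Fin.val_last]; omega
  have e0 : A.updateCol (Fin.last (m+1)) (fun k => A k (Fin.last (m+1))) = A := by
    ext i j
    by_cases h : j = Fin.last (m+1)
    · subst h; rw [Matrix.updateCol_self]
    · rw [Matrix.updateCol_ne h]
  have e1 : det (A.updateCol (Fin.last (m+1)) (d • (fun k => A k (Fin.last (m+1)))))
      = d * det A := by
    rw [Matrix.det_updateCol_smul, e0]
  set A1 := A.updateCol (Fin.last (m+1)) (d • (fun k => A k (Fin.last (m+1)))) with hA1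
  have e2 : det (A1.updateCol (Fin.last (m+1)) (fun k => A1 k (Fin.last (m+1)) + c • A1 k jm))
      = det A1 := det_updateCol_add_smul_self A1 hne c
  set A2 := A1.updateCol (Fin.last (m+1)) (fun k => A1 k (Fin.last (m+1)) + c • A1 k jm)
    with hA2
  have hcol : ∀ i, A2 i (Fin.last (m+1)) = d * A i (Fin.last (m+1)) + c * A i jm := by
    intro i
    rw [hA2, Matrix.updateCol_self, hA1, Matrix.updateCol_self,
      Matrix.updateCol_ne hne.symm]
    simp [mul_comm]
  have hsingle : ∀ i, i ≠ Fin.last (m+1) → A2 i (Fin.last (m+1)) = 0 := by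
    intro i hi
    have hi' : (i:ℕ) ≤ m := by
      have h2 := i.isLt
      have h3 : (i:ℕ) ≠ m+1 := fun h => hi (Fin.ext (by simp [h]))
      omega
    rw [hcol]; exact h0 i hi'
  have key : d * det A = det A2 := by rw [e2, e1]
  rw [key, det_col_single A2 (Fin.last (m+1)) (Fin.last (m+1)) hsingle]
  have hval : A2 (Fin.last (m+1)) (Fin.last (m+1)) = v := by rw [hcol]; exact hv
  have hsub : A2.submatrix (Fin.last (m+1)).succAbove (Fin.last (m+1)).succAbove
      = A.submatrix Fin.castSucc Fin.castSucc := by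
    ext a b
    have hb : Fin.castSucc b ≠ Fin.last (m+1) := (Fin.castSucc_lt_last b).ne
    simp only [Matrix.submatrix_apply, Fin.succAbove_last, hA2, hA1,
      Matrix.updateCol_ne hb]
  rw [hval, hsub]
  have hsign : ((-1:R))^(((Fin.last (m+1)):ℕ) + ((Fin.last (m+1)):ℕ)) = 1 := by
    rw [Fin.val_last]
    exact Even.neg_one_pow ⟨m+1, by ring⟩
  rw [hsign]; ring

/-- scaled row operation `R_last ← d • R_last + c • R_m` making the last row a
single entry `v` at the right, then expansion. -/
lemma det_rowop_scaled {m : ℕ} (A : Matrix (Fin (m+2)) (Fin (m+2)) R) (d c v : R)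
    (h0 : ∀ b : Fin (m+2), (b:ℕ) ≤ m →
      d * A (Fin.last (m+1)) b + c * A ⟨m, by omega⟩ b = 0)
    (hv : d * A (Fin.last (m+1)) (Fin.last (m+1)) + c * A ⟨m, by omega⟩ (Fin.last (m+1)) = v) :
    d * det A = v * det (A.submatrix Fin.castSucc Fin.castSucc) := by
  set jm : Fin (m+2) := ⟨m, by omega⟩ with hjm
  have hne : Fin.last (m+1) ≠ jm := by
    simp only [hjm, Fin.ne_iff_vne, Fin.val_last]; omega
  have e0 : A.updateRow (Fin.last (m+1)) (A (Fin.last (m+1))) = A := by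
    ext i j
    by_cases h : i = Fin.last (m+1)
    · subst h; rw [Matrix.updateRow_self]
    · rw [Matrix.updateRow_ne h]
  have e1 : det (A.updateRow (Fin.last (m+1)) (d • A (Fin.last (m+1)))) = d * det A := by
    rw [Matrix.det_updateRow_smul, e0]
  set A1 := A.updateRow (Fin.last (m+1)) (d • A (Fin.last (m+1))) with hA1
  have e2 : det (A1.updateRow (Fin.last (m+1)) (A1 (Fin.last (m+1)) + c • A1 jm))
      = det A1 := det_updateRow_add_smul_self A1 hne c
  set A2 := A1.updateRow (Fin.last (m+1)) (A1 (Fin.last (m+1)) + c • A1 jm) with hA2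
  have hrow : ∀ j, A2 (Fin.last (m+1)) j = d * A (Fin.last (m+1)) j + c * A jm j := by
    intro j
    rw [hA2, Matrix.updateRow_self, hA1]
    have : A1 jm = A jm := Matrix.updateRow_ne hne.symm
    rw [hA1] at this
    simp [Matrix.updateRow_self, this]
  have hsingle : ∀ j, j ≠ Fin.last (m+1) → A2 (Fin.last (m+1)) j = 0 := by
    intro j hj
    have hj' : (j:ℕ) ≤ m := by
      have h2 := j.isLt
      have h3 : (j:ℕ) ≠ m+1 := fun h => hj (Fin.ext (by simp [h]))
      omega
    rw [hrow]; exact h0 j hj'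
  have key : d * det A = det A2 := by rw [e2, e1]
  rw [key, det_row_single A2 (Fin.last (m+1)) (Fin.last (m+1)) hsingle]
  have hval : A2 (Fin.last (m+1)) (Fin.last (m+1)) = v := by rw [hrow]; exact hv
  have hsub : A2.submatrix (Fin.last (m+1)).succAbove (Fin.last (m+1)).succAbove
      = A.submatrix Fin.castSucc Fin.castSucc := by
    ext a b
    have ha : Fin.castSucc a ≠ Fin.last (m+1) := (Fin.castSucc_lt_last a).ne
    simp only [Matrix.submatrix_apply, Fin.succAbove_last, hA2, hA1,
      Matrix.updateRow_ne ha]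
  rw [hval, hsub]
  have hsign : ((-1:R))^(((Fin.last (m+1)):ℕ) + ((Fin.last (m+1)):ℕ)) = 1 := by
    rw [Fin.val_last]
    exact Even.neg_one_pow ⟨m+1, by ring⟩
  rw [hsign]; ring

end Generic2

section GKDefs

variable {R : Type*} [CommRing R]

def GKfun (P Q P' Q' : ℕ → R) (s : ℕ → Bool) (a b : ℕ) : R :=
  if a < b then P a * Q b
  else if b < a then P' b * Q' a
  else if s a then P a * Q a else P' a * Q' a

def GKmat (n : ℕ) (P Q P' Q' : ℕ → R) (s : ℕ → Bool) : Matrix (Fin n) (Fin n) R :=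
  fun a b => GKfun P Q P' Q' s a b

def GKcol (n : ℕ) (P Q P' Q' : ℕ → R) (s : ℕ → Bool) : Matrix (Fin n) (Fin n) R :=
  fun a b => if (b : ℕ) = n - 1 then P a else GKfun P Q P' Q' s a b

def GKrow (n : ℕ) (P Q P' Q' : ℕ → R) (s : ℕ → Bool) : Matrix (Fin n) (Fin n) R :=
  fun a b => if (a : ℕ) = n - 1 then P' b else GKfun P Q P' Q' s a b

def GKt (P Q P' Q' : ℕ → R) (s : ℕ → Bool) (m : ℕ) : R :=
  (if s m then Q m else Q' m) * (if s (m+1) then P (m+1) else P' (m+1))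
  - (if s m then P' m else P m) * (if s (m+1) then Q' (m+1) else Q (m+1))

variable (P Q P' Q' : ℕ → R) (s : ℕ → Bool)

lemma GKfun_lt {a b : ℕ} (h : a < b) : GKfun P Q P' Q' s a b = P a * Q b := by
  simp [GKfun, h]

lemma GKfun_gt {a b : ℕ} (h : b < a) : GKfun P Q P' Q' s a b = P' b * Q' a := by
  have h' : ¬ a < b := by omega
  simp [GKfun, h, h']

lemma GKfun_diag (a : ℕ) : GKfun P Q P' Q' s a a
    = if s a then P a * Q a else P' a * Q' a := by
  simp [GKfun]

/-- multilinearity link: last column of `GKmat` is `Q (n-1) • P` when `s (n-1) = true` -/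
lemma GKmat_link_col (m : ℕ) (hs : s m = true) :
    det (GKmat (m+1) P Q P' Q' s) = Q m * det (GKcol (m+1) P Q P' Q' s) := by
  have e0 : (GKcol (m+1) P Q P' Q' s).updateCol (Fin.last m) (fun a => P a)
      = GKcol (m+1) P Q P' Q' s := by
    ext i j
    by_cases h : j = Fin.last m
    · subst h; rw [Matrix.updateCol_self, GKcol]
      simp
    · rw [Matrix.updateCol_ne h]
  have e1 : (GKcol (m+1) P Q P' Q' s).updateCol (Fin.last m) (Q m • (fun a : Fin (m+1) => P (a:ℕ)))
      = GKmat (m+1) P Q P' Q' s := by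
    ext i j
    by_cases h : j = Fin.last m
    · subst h
      rw [Matrix.updateCol_self]
      have hj : ((Fin.last m : Fin (m+1)) : ℕ) = m := Fin.val_last m
      rcases lt_or_eq_of_le (Nat.lt_succ_iff.mp i.isLt) with hi | hi
      · rw [GKmat, GKfun_lt P Q P' Q' s (by omega : (i:ℕ) < ((Fin.last m : Fin (m+1)):ℕ))]
        simp [mul_comm]
      · have : (i : Fin (m+1)) = Fin.last m := Fin.ext (by simp [hi])
        rw [this, GKmat, GKfun_diag, hj, hs]
        simp [mul_comm]
    · rw [Matrix.updateCol_ne h]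
      have hj : (j:ℕ) ≠ m := fun hc => h (Fin.ext (by simp [hc]))
      rw [GKcol, GKmat, if_neg (by omega : ¬ (j:ℕ) = m+1-1)]
  rw [← e1, Matrix.det_updateCol_smul, e0]

/-- multilinearity link: last row of `GKmat` is `Q' (n-1) • P'` when `s (n-1) = false` -/
lemma GKmat_link_row (m : ℕ) (hs : s m = false) :
    det (GKmat (m+1) P Q P' Q' s) = Q' m * det (GKrow (m+1) P Q P' Q' s) := by
  have e0 : (GKrow (m+1) P Q P' Q' s).updateRow (Fin.last m) (fun b => P' b)
      = GKrow (m+1) P Q P' Q' s := by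
    ext i j
    by_cases h : i = Fin.last m
    · subst h; rw [Matrix.updateRow_self, GKrow]
      simp
    · rw [Matrix.updateRow_ne h]
  have e1 : (GKrow (m+1) P Q P' Q' s).updateRow (Fin.last m) (Q' m • (fun b : Fin (m+1) => P' (b:ℕ)))
      = GKmat (m+1) P Q P' Q' s := by
    ext i j
    by_cases h : i = Fin.last m
    · subst h
      rw [Matrix.updateRow_self]
      have hi : ((Fin.last m : Fin (m+1)) : ℕ) = m := Fin.val_last m
      rcases lt_or_eq_of_le (Nat.lt_succ_iff.mp j.isLt) with hj | hj
      · rw [GKmat, GKfun_gt P Q P' Q' s (by omega : (j:ℕ) < ((Fin.last m : Fin (m+1)):ℕ))]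
        simp [mul_comm]
      · have : (j : Fin (m+1)) = Fin.last m := Fin.ext (by simp [hj])
        rw [this, GKmat, GKfun_diag, hi, hs]
        simp [mul_comm]
    · rw [Matrix.updateRow_ne h]
      have hi : (i:ℕ) ≠ m := fun hc => h (Fin.ext (by simp [hc]))
      rw [GKrow, GKmat, if_neg (by omega : ¬ (i:ℕ) = m+1-1)]
  rw [← e1, Matrix.det_updateRow_smul, e0]

end GKDefs

section GKMain
variable {R : Type*} [CommRing R] [IsDomain R]

set_option maxHeartbeats 1000000 in
lemma GKaux (P Q P' Q' : ℕ → R) (s : ℕ → Bool)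
    (hQ : ∀ i, Q i ≠ 0) (hQ' : ∀ i, Q' i ≠ 0) (m : ℕ) :
    (s m = true → det (GKcol (m+1) P Q P' Q' s)
        = (if s 0 then P 0 else P' 0) * ∏ j ∈ Finset.range m, GKt P Q P' Q' s j) ∧
    (s m = false → det (GKrow (m+1) P Q P' Q' s)
        = (if s 0 then P 0 else P' 0) * ∏ j ∈ Finset.range m, GKt P Q P' Q' s j) := by
  induction m with
  | zero =>
    constructor
    · intro hs
      rw [Matrix.det_fin_one]
      simp [GKcol, hs]
    · intro hs
      rw [Matrix.det_fin_one]
      simp [GKrow, hs]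
  | succ m ih =>
    constructor
    · -- last column case : s (m+1) = true
      intro hsm1
      cases hsm : s m with
      | true =>
        have key := det_colop (GKcol (m+2) P Q P' Q' s) (-(Q m)) (GKt P Q P' Q' s m)
          (by
            intro a ha
            rcases lt_or_eq_of_le ha with ha' | ha'
            · simp only [GKcol, GKfun, Fin.val_last]
              split_ifs <;> first | (exfalso; omega) | ring
            · simp only [GKcol, GKfun, Fin.val_last, ha', hsm]
              split_ifs <;> first | (exfalso; omega) | contradiction | ring | simp_all)
          (by
            simp only [GKcol, GKfun, Fin.val_last, GKt, hsm, hsm1]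
            split_ifs <;> first | (exfalso; omega) | contradiction | ring | simp_all)
        have hsub : (GKcol (m+2) P Q P' Q' s).submatrix Fin.castSucc
            (Fin.succAbove ⟨m, by omega⟩) = GKcol (m+1) P Q P' Q' s := by
          ext a b
          have hco := succAbove_coe (⟨m, by omega⟩ : Fin (m+2)) b
          by_cases hb : (b:ℕ) < m
          · rw [if_pos hb] at hco
            simp only [Matrix.submatrix_apply, GKcol, GKfun, hco, Fin.coe_castSucc]
            split_ifs <;> first | rfl | (exfalso; omega)
          · have hbm : (b:ℕ) = m := by have := b.isLt; omega
            rw [if_neg hb] at hco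
            simp only [Matrix.submatrix_apply, GKcol, GKfun, hco, hbm, Fin.coe_castSucc]
            split_ifs <;> first | rfl | (exfalso; omega)
        rw [key, hsub, (ih.1 hsm), Finset.prod_range_succ]
        ring
      | false =>
        have key := det_rowop_scaled (GKcol (m+2) P Q P' Q' s) (Q' m) (-(Q' (m+1)))
          (GKt P Q P' Q' s m)
          (by
            intro b hb
            rcases lt_or_eq_of_le hb with hb' | hb'
            · simp only [GKcol, GKfun, Fin.val_last]
              split_ifs <;> first | (exfalso; omega) | ring
            · simp only [GKcol, GKfun, Fin.val_last, hb', hsm]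
              split_ifs <;> first | (exfalso; omega) | contradiction | ring | simp_all)
          (by
            simp only [GKcol, GKfun, Fin.val_last, GKt, hsm, hsm1]
            split_ifs <;> first | (exfalso; omega) | contradiction | ring | simp_all)
        have hsub : (GKcol (m+2) P Q P' Q' s).submatrix Fin.castSucc Fin.castSucc
            = GKmat (m+1) P Q P' Q' s := by
          ext a b
          simp only [Matrix.submatrix_apply, GKcol, GKmat, Fin.coe_castSucc]
          rw [if_neg (by have := b.isLt; omega)]
        rw [hsub, GKmat_link_row P Q P' Q' s m hsm, (ih.2 hsm)] at key
        have key2 : Q' m * det (GKcol (m+2) P Q P' Q' s)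
            = Q' m * (GKt P Q P' Q' s m * ((if s 0 then P 0 else P' 0) *
                ∏ j ∈ Finset.range m, GKt P Q P' Q' s j)) := by
          rw [key]; ring
        have := mul_left_cancel₀ (hQ' m) key2
        rw [this, Finset.prod_range_succ]
        ring
    · -- last row case : s (m+1) = false
      intro hsm1
      cases hsm : s m with
      | false =>
        have key := det_rowop (GKrow (m+2) P Q P' Q' s) (-(Q' m)) (GKt P Q P' Q' s m)
          (by
            intro b hb
            rcases lt_or_eq_of_le hb with hb' | hb'
            · simp only [GKrow, GKfun, Fin.val_last]
              split_ifs <;> first | (exfalso; omega) | ring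
            · simp only [GKrow, GKfun, Fin.val_last, hb', hsm]
              split_ifs <;> first | (exfalso; omega) | contradiction | ring | simp_all)
          (by
            simp only [GKrow, GKfun, Fin.val_last, GKt, hsm, hsm1]
            split_ifs <;> first | (exfalso; omega) | contradiction | ring | simp_all)
        have hsub : (GKrow (m+2) P Q P' Q' s).submatrix
            (Fin.succAbove ⟨m, by omega⟩) Fin.castSucc = GKrow (m+1) P Q P' Q' s := by
          ext a b
          have hco := succAbove_coe (⟨m, by omega⟩ : Fin (m+2)) a
          by_cases ha : (a:ℕ) < m
          · rw [if_pos ha] at hco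
            simp only [Matrix.submatrix_apply, GKrow, GKfun, hco, Fin.coe_castSucc]
            split_ifs <;> first | rfl | (exfalso; omega)
          · have ham : (a:ℕ) = m := by have := a.isLt; omega
            rw [if_neg ha] at hco
            simp only [Matrix.submatrix_apply, GKrow, GKfun, hco, ham, Fin.coe_castSucc]
            split_ifs <;> first | rfl | (exfalso; omega)
        rw [key, hsub, (ih.2 hsm), Finset.prod_range_succ]
        ring
      | true =>
        have key := det_colop_scaled (GKrow (m+2) P Q P' Q' s) (Q m) (-(Q (m+1)))
          (GKt P Q P' Q' s m)
          (by
            intro a ha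
            rcases lt_or_eq_of_le ha with ha' | ha'
            · simp only [GKrow, GKfun, Fin.val_last]
              split_ifs <;> first | (exfalso; omega) | ring
            · simp only [GKrow, GKfun, Fin.val_last, ha', hsm]
              split_ifs <;> first | (exfalso; omega) | contradiction | ring | simp_all)
          (by
            simp only [GKrow, GKfun, Fin.val_last, GKt, hsm, hsm1]
            split_ifs <;> first | (exfalso; omega) | contradiction | ring | simp_all)
        have hsub : (GKrow (m+2) P Q P' Q' s).submatrix Fin.castSucc Fin.castSucc
            = GKmat (m+1) P Q P' Q' s := by
          ext a b
          simp only [Matrix.submatrix_apply, GKrow, GKmat, Fin.coe_castSucc]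
          rw [if_neg (by have := a.isLt; omega)]
        rw [hsub, GKmat_link_col P Q P' Q' s m hsm, (ih.1 hsm)] at key
        have key2 : Q m * det (GKrow (m+2) P Q P' Q' s)
            = Q m * (GKt P Q P' Q' s m * ((if s 0 then P 0 else P' 0) *
                ∏ j ∈ Finset.range m, GKt P Q P' Q' s j)) := by
          rw [key]; ring
        have := mul_left_cancel₀ (hQ m) key2
        rw [this, Finset.prod_range_succ]
        ring

lemma GKdet (P Q P' Q' : ℕ → R) (s : ℕ → Bool)
    (hQ : ∀ i, Q i ≠ 0) (hQ' : ∀ i, Q' i ≠ 0) (m : ℕ) :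
    det (GKmat (m+1) P Q P' Q' s)
      = (if s 0 then P 0 else P' 0) * (∏ j ∈ Finset.range m, GKt P Q P' Q' s j)
        * (if s m then Q m else Q' m) := by
  cases hsm : s m with
  | true =>
    rw [GKmat_link_col P Q P' Q' s m hsm, (GKaux P Q P' Q' s hQ hQ' m).1 hsm]
    simp; ring
  | false =>
    rw [GKmat_link_row P Q P' Q' s m hsm, (GKaux P Q P' Q' s hQ hQ' m).2 hsm]
    simp; ring

end GKMain

section Transfer
open MvPolynomial

lemma GKdet_real (P Q P' Q' : ℕ → ℝ) (s : ℕ → Bool) (m : ℕ) :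
    det (GKmat (m+1) P Q P' Q' s)
      = (if s 0 then P 0 else P' 0) * (∏ j ∈ Finset.range m, GKt P Q P' Q' s j)
        * (if s m then Q m else Q' m) := by
  classical
  let Rg := MvPolynomial (ℕ × Fin 4) ℤ
  let gP : ℕ → Rg := fun t => MvPolynomial.X (t, 0)
  let gQ : ℕ → Rg := fun t => MvPolynomial.X (t, 1)
  let gP' : ℕ → Rg := fun t => MvPolynomial.X (t, 2)
  let gQ' : ℕ → Rg := fun t => MvPolynomial.X (t, 3)
  have hgen := GKdet gP gQ gP' gQ' s (fun i => MvPolynomial.X_ne_zero _)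
    (fun i => MvPolynomial.X_ne_zero _) m
  let vv : ℕ × Fin 4 → ℝ := fun p =>
    if p.2 = 0 then P p.1 else if p.2 = 1 then Q p.1 else if p.2 = 2 then P' p.1 else Q' p.1
  let f : Rg →+* ℝ := MvPolynomial.eval₂Hom (Int.castRingHom ℝ) vv
  have hfP : ∀ t, f (gP t) = P t := fun t => by simp only [f, gP]; rw [MvPolynomial.eval₂Hom_X']; simp [vv]
  have hfQ : ∀ t, f (gQ t) = Q t := fun t => by simp only [f, gQ]; rw [MvPolynomial.eval₂Hom_X']; simp [vv]
  have hfP' : ∀ t, f (gP' t) = P' t := fun t => by simp only [f, gP']; rw [MvPolynomial.eval₂Hom_X']; simp [vv]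
  have hfQ' : ∀ t, f (gQ' t) = Q' t := fun t => by simp only [f, gQ']; rw [MvPolynomial.eval₂Hom_X']; simp [vv]
  have hmapped := congrArg f hgen
  rw [RingHom.map_det] at hmapped
  have hmap : f.mapMatrix (GKmat (m+1) gP gQ gP' gQ' s) = GKmat (m+1) P Q P' Q' s := by
    ext a b
    simp only [RingHom.mapMatrix_apply, Matrix.map_apply, GKmat, GKfun, apply_ite f,
      _root_.map_mul, hfP, hfQ, hfP', hfQ']
  rw [hmap] at hmapped
  rw [hmapped, _root_.map_mul, _root_.map_mul, map_prod, apply_ite f, apply_ite f,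
    hfP 0, hfP' 0, hfQ m, hfQ' m]
  congr 1
  congr 1
  exact Finset.prod_congr rfl fun j _ => by
    simp only [GKt, map_sub, _root_.map_mul, apply_ite f, hfP, hfQ, hfP', hfQ']
end Transfer

section Application

lemma det_eq_zero_of_rank_one_block {k : ℕ} (M : Matrix (Fin k) (Fin k) ℝ)
    (u w : Fin k → ℝ) (S T : Finset (Fin k))
    (h : ∀ a ∈ S, ∀ b ∈ T, M a b = u a * w b)
    (hcard : k + 2 ≤ S.card + T.card) : M.det = 0 := by
  classical
  set Tc := Tᶜ with hTc
  let v : ↥S → ((↥Tc → ℝ) × ℝ) := fun a => (fun b => M a b, u a)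
  have hnli : ¬ LinearIndependent ℝ v := by
    intro hli
    have hc := hli.fintype_card_le_finrank
    rw [Fintype.card_coe] at hc
    have hdim : Module.finrank ℝ ((↥Tc → ℝ) × ℝ) = Tc.card + 1 := by
      rw [Module.finrank_prod, Module.finrank_pi, Module.finrank_self, Fintype.card_coe]
    rw [hdim] at hc
    have h1 : Tc.card = k - T.card := by
      rw [hTc, Finset.card_compl, Fintype.card_fin]
    have h2 : T.card ≤ k := by simpa using Finset.card_le_univ T
    have h3 : S.card ≤ k := by simpa using Finset.card_le_univ S
    omega
  obtain ⟨g, hg0, a0, hga0⟩ := Fintype.not_linearIndependent_iff.mp hnli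
  have hfst : ∀ b : ↥Tc, ∑ a : ↥S, g a * M (a:Fin k) (b : Fin k) = 0 := by
    intro b
    have h1 := congrArg Prod.fst hg0
    rw [Prod.fst_sum] at h1
    have h2 := congrFun h1 b
    simpa [v] using h2
  have hsnd : ∑ a : ↥S, g a * u (a:Fin k) = 0 := by
    have h1 := congrArg Prod.snd hg0
    rw [Prod.snd_sum] at h1
    simpa [v] using h1
  let c : Fin k → ℝ := fun i => if h : i ∈ S then g ⟨i, h⟩ else 0
  have hc0 : c ≠ 0 := by
    intro hc
    apply hga0
    have := congrFun hc (a0 : Fin k)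
    simpa [c, a0.2] using this
  have hsum : ∀ b : Fin k, ∑ i : Fin k, c i * M i b = ∑ a : ↥S, g a * M (a:Fin k) b := by
    intro b
    have e1 : ∑ i : Fin k, c i * M i b = ∑ i ∈ S, c i * M i b :=
      (Finset.sum_subset (Finset.subset_univ S)
        (fun x _ hx => by simp [c, hx])).symm
    rw [e1, ← Finset.sum_coe_sort S (fun i => c i * M i b)]
    exact Finset.sum_congr rfl fun a _ => by simp [c, a.2]
  have hvm : c ᵥ* M = 0 := by
    funext b
    have e0 : (c ᵥ* M) b = ∑ i : Fin k, c i * M i b := by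
      simp [Matrix.vecMul, dotProduct]
    rw [e0, hsum]
    by_cases hb : b ∈ T
    · have e2 : ∀ a : ↥S, g a * M (a:Fin k) b = (g a * u (a:Fin k)) * w b := by
        intro a
        rw [h (a:Fin k) a.2 b hb]; ring
      rw [Finset.sum_congr rfl fun a _ => e2 a, ← Finset.sum_mul, hsnd, zero_mul]
      rfl
    · have hbT : b ∈ Tc := by simp [hTc, hb]
      have := hfst ⟨b, hbT⟩
      simpa using this
  exact Matrix.exists_vecMul_eq_zero_iff.mp ⟨c, hc0, hvm⟩

def spMat {n : ℕ} (ψ χ : Fin n → ℝ) : Matrix (Fin n) (Fin n) ℝ :=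
  fun i j => ψ (min i j) * χ (max i j)

lemma aux_zero {n k : ℕ} (ψ χ : Fin n → ℝ) (iE jE : Fin k ↪o Fin n)
    (hfail : ¬ ∀ m : Fin k, ∀ h : (m:ℕ)+1 < k,
      max (iE m) (jE m) < min (iE ⟨(m:ℕ)+1, h⟩) (jE ⟨(m:ℕ)+1, h⟩)) :
    det ((spMat ψ χ).submatrix iE jE) = 0 := by
  push_neg at hfail
  obtain ⟨m, hm1, hge⟩ := hfail
  set m1 : Fin k := ⟨(m:ℕ)+1, hm1⟩ with hm1def
  have hmm1 : m < m1 := by rw [Fin.lt_def]; simp [hm1def]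
  have hcase : iE m1 ≤ jE m ∨ jE m1 ≤ iE m := by
    rcases min_le_iff.mp hge with h' | h'
    · rcases le_max_iff.mp h' with h'' | h''
      · exact absurd h'' (not_le.mpr (iE.strictMono hmm1))
      · exact Or.inl h''
    · rcases le_max_iff.mp h' with h'' | h''
      · exact Or.inr h''
      · exact absurd h'' (not_le.mpr (jE.strictMono hmm1))
  rcases hcase with hA | hB
  · apply det_eq_zero_of_rank_one_block _ (fun a => ψ (iE a)) (fun b => χ (jE b))
      (Finset.Iic m1) (Finset.Ici m)
    · intro a ha b hb
      rw [Finset.mem_Iic] at ha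
      rw [Finset.mem_Ici] at hb
      have h1 : iE a ≤ jE b := le_trans (iE.monotone ha) (le_trans hA (jE.monotone hb))
      simp only [Matrix.submatrix_apply, spMat]
      rw [min_eq_left h1, max_eq_right h1]
    · rw [Fin.card_Iic, Fin.card_Ici]
      have : (m1:ℕ) = (m:ℕ)+1 := by simp [hm1def]
      omega
  · apply det_eq_zero_of_rank_one_block _ (fun a => χ (iE a)) (fun b => ψ (jE b))
      (Finset.Ici m) (Finset.Iic m1)
    · intro a ha b hb
      rw [Finset.mem_Ici] at ha
      rw [Finset.mem_Iic] at hb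
      have h1 : jE b ≤ iE a := le_trans (jE.monotone hb) (le_trans hB (iE.monotone ha))
      simp only [Matrix.submatrix_apply, spMat]
      rw [min_eq_right h1, max_eq_left h1]
      ring
    · rw [Fin.card_Iic, Fin.card_Ici]
      have : (m1:ℕ) = (m:ℕ)+1 := by simp [hm1def]
      omega

end Application

section MainAux

set_option maxHeartbeats 1000000 in
lemma aux_main {n k : ℕ} (hk : 0 < k) (ψ χ : Fin n → ℝ) (iE jE : Fin k ↪o Fin n)
    (hcond : ∀ m : Fin k, ∀ h : (m:ℕ)+1 < k,
      max (iE m) (jE m) < min (iE ⟨(m:ℕ)+1, h⟩) (jE ⟨(m:ℕ)+1, h⟩)) :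
    det ((spMat ψ χ).submatrix iE jE)
      = ψ (min (iE ⟨0, hk⟩) (jE ⟨0, hk⟩)) *
        (∏ m : Fin k, if h : (m:ℕ)+1 < k then
            χ (max (iE m) (jE m)) * ψ (min (iE ⟨(m:ℕ)+1,h⟩) (jE ⟨(m:ℕ)+1,h⟩))
            - ψ (max (iE m) (jE m)) * χ (min (iE ⟨(m:ℕ)+1,h⟩) (jE ⟨(m:ℕ)+1,h⟩))
          else 1) *
        χ (max (iE ⟨k-1, by omega⟩) (jE ⟨k-1, by omega⟩)) := by
  have hchain : ∀ a b : Fin k, (a:ℕ) < (b:ℕ) →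
      max (iE a) (jE a) < min (iE b) (jE b) := by
    have key : ∀ (d : ℕ) (a b : Fin k), (b:ℕ) = (a:ℕ) + d + 1 →
        max (iE a) (jE a) < min (iE b) (jE b) := by
      intro d
      induction d with
      | zero =>
        intro a b hb
        have h1 : (a:ℕ)+1 < k := by have := b.isLt; omega
        have hbeq : b = ⟨(a:ℕ)+1, h1⟩ := Fin.ext (by simpa using hb)
        rw [hbeq]; exact hcond a h1
      | succ d ihd =>
        intro a b hb
        have hb' : (a:ℕ)+d+1 < k := by have := b.isLt; omega
        have h1 := ihd a ⟨(a:ℕ)+d+1, hb'⟩ rfl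
        have h2 : (((⟨(a:ℕ)+d+1, hb'⟩ : Fin k)):ℕ)+1 < k := by
          have := b.isLt; simp only []; omega
        have h3 := hcond ⟨(a:ℕ)+d+1, hb'⟩ h2
        have hbeq : b = ⟨(((⟨(a:ℕ)+d+1, hb'⟩ : Fin k)):ℕ)+1, h2⟩ := Fin.ext (by simp; omega)
        rw [hbeq]
        exact lt_trans h1 (lt_of_le_of_lt min_le_max h3)
    intro a b hab
    exact key ((b:ℕ) - (a:ℕ) - 1) a b (by omega)
  obtain ⟨k', rfl⟩ : ∃ k', k = k'+1 := ⟨k-1, by omega⟩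
  set vP : ℕ → ℝ := fun t => if h : t < k'+1 then ψ (iE ⟨t,h⟩) else 0 with hvP
  set vQ : ℕ → ℝ := fun t => if h : t < k'+1 then χ (jE ⟨t,h⟩) else 0 with hvQ
  set vP' : ℕ → ℝ := fun t => if h : t < k'+1 then ψ (jE ⟨t,h⟩) else 0 with hvP'
  set vQ' : ℕ → ℝ := fun t => if h : t < k'+1 then χ (iE ⟨t,h⟩) else 0 with hvQ'
  set sb : ℕ → Bool := fun t =>
    if h : t < k'+1 then decide (iE ⟨t,h⟩ ≤ jE ⟨t,h⟩) else true with hsb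
  have eψmin : ∀ (t:ℕ) (h : t < k'+1),
      (if sb t then vP t else vP' t) = ψ (min (iE ⟨t,h⟩) (jE ⟨t,h⟩)) := by
    intro t h
    rw [hsb, hvP, hvP']
    simp only [dif_pos h]
    by_cases hle : iE ⟨t,h⟩ ≤ jE ⟨t,h⟩
    · rw [if_pos (by simpa using hle), min_eq_left hle]
    · rw [if_neg (by simpa using hle), min_eq_right (le_of_not_ge hle)]
  have eψmax : ∀ (t:ℕ) (h : t < k'+1),
      (if sb t then vP' t else vP t) = ψ (max (iE ⟨t,h⟩) (jE ⟨t,h⟩)) := by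
    intro t h
    rw [hsb, hvP, hvP']
    simp only [dif_pos h]
    by_cases hle : iE ⟨t,h⟩ ≤ jE ⟨t,h⟩
    · rw [if_pos (by simpa using hle), max_eq_right hle]
    · rw [if_neg (by simpa using hle), max_eq_left (le_of_not_ge hle)]
  have eχmax : ∀ (t:ℕ) (h : t < k'+1),
      (if sb t then vQ t else vQ' t) = χ (max (iE ⟨t,h⟩) (jE ⟨t,h⟩)) := by
    intro t h
    rw [hsb, hvQ, hvQ']
    simp only [dif_pos h]
    by_cases hle : iE ⟨t,h⟩ ≤ jE ⟨t,h⟩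
    · rw [if_pos (by simpa using hle), max_eq_right hle]
    · rw [if_neg (by simpa using hle), max_eq_left (le_of_not_ge hle)]
  have eχmin : ∀ (t:ℕ) (h : t < k'+1),
      (if sb t then vQ' t else vQ t) = χ (min (iE ⟨t,h⟩) (jE ⟨t,h⟩)) := by
    intro t h
    rw [hsb, hvQ, hvQ']
    simp only [dif_pos h]
    by_cases hle : iE ⟨t,h⟩ ≤ jE ⟨t,h⟩
    · rw [if_pos (by simpa using hle), min_eq_left hle]
    · rw [if_neg (by simpa using hle), min_eq_right (le_of_not_ge hle)]
  have hM : (spMat ψ χ).submatrix iE jE = GKmat (k'+1) vP vQ vP' vQ' sb := by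
    ext a b
    simp only [Matrix.submatrix_apply, spMat, GKmat]
    rcases lt_trichotomy ((a:ℕ)) ((b:ℕ)) with h | h | h
    · have hc := hchain a b h
      have h1 : iE a ≤ jE b :=
        le_of_lt (lt_of_le_of_lt (le_max_left _ _) (lt_of_lt_of_le hc (min_le_right _ _)))
      rw [GKfun_lt vP vQ vP' vQ' sb h, min_eq_left h1, max_eq_right h1, hvP, hvQ]
      simp only [dif_pos a.isLt, dif_pos b.isLt, Fin.eta]
    · have hab : a = b := Fin.ext h
      subst hab
      rw [GKfun_diag, hsb, hvP, hvQ, hvP', hvQ']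
      simp only [dif_pos a.isLt, Fin.eta]
      by_cases hle : iE a ≤ jE a
      · rw [if_pos (by simpa using hle), min_eq_left hle, max_eq_right hle]
      · rw [if_neg (by simpa using hle), min_eq_right (le_of_not_ge hle),
          max_eq_left (le_of_not_ge hle)]
    · have hc := hchain b a h
      have h1 : jE b ≤ iE a :=
        le_of_lt (lt_of_le_of_lt (le_max_right _ _) (lt_of_lt_of_le hc (min_le_left _ _)))
      rw [GKfun_gt vP vQ vP' vQ' sb h, min_eq_right h1, max_eq_left h1, hvP', hvQ']
      simp only [dif_pos a.isLt, dif_pos b.isLt, Fin.eta]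
  set F : ℕ → ℝ := fun t => if h : t+1 < k'+1 then
      χ (max (iE ⟨t, by omega⟩) (jE ⟨t, by omega⟩)) * ψ (min (iE ⟨t+1,h⟩) (jE ⟨t+1,h⟩))
      - ψ (max (iE ⟨t, by omega⟩) (jE ⟨t, by omega⟩)) * χ (min (iE ⟨t+1,h⟩) (jE ⟨t+1,h⟩))
    else 1 with hF
  have hT : (∏ m : Fin (k'+1), if h : (m:ℕ)+1 < k'+1 then
        χ (max (iE m) (jE m)) * ψ (min (iE ⟨(m:ℕ)+1,h⟩) (jE ⟨(m:ℕ)+1,h⟩))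
        - ψ (max (iE m) (jE m)) * χ (min (iE ⟨(m:ℕ)+1,h⟩) (jE ⟨(m:ℕ)+1,h⟩)) else 1)
      = ∏ j ∈ Finset.range k', GKt vP vQ vP' vQ' sb j := by
    have e1 : ∀ m : Fin (k'+1), (if h : (m:ℕ)+1 < k'+1 then
        χ (max (iE m) (jE m)) * ψ (min (iE ⟨(m:ℕ)+1,h⟩) (jE ⟨(m:ℕ)+1,h⟩))
        - ψ (max (iE m) (jE m)) * χ (min (iE ⟨(m:ℕ)+1,h⟩) (jE ⟨(m:ℕ)+1,h⟩)) else 1)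
        = F ((m:ℕ)) := by
      intro m
      simp only [hF]
    rw [Finset.prod_congr rfl (fun m _ => e1 m), Fin.prod_univ_eq_prod_range F (k'+1),
      Finset.prod_range_succ, show F k' = 1 from by simp only [hF]; exact dif_neg (by omega),
      mul_one]
    refine Finset.prod_congr rfl (fun j hj => ?_)
    rw [Finset.mem_range] at hj
    simp only [hF]
    rw [dif_pos (by omega : j+1 < k'+1)]
    simp only [GKt]
    rw [eχmax j (by omega), eψmin (j+1) (by omega), eψmax j (by omega),
      eχmin (j+1) (by omega)]
  rw [hM, GKdet_real, eψmin 0 (by omega), eχmax k' (by omega), ← hT]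
  rfl
end MainAux


/-- Gantmacher–Krein formula for minors of a single-pair matrix
`X i j = ψ (min i j) * χ (max i j)`. -/
theorem minors_of_single_pair (n k : ℕ) (hk : 0 < k) (ψ χ : Fin n → ℝ)
    (I J : Finset (Fin n)) (hI : I.card = k) (hJ : J.card = k) :
    (let X : Matrix (Fin n) (Fin n) ℝ := fun i j => ψ (min i j) * χ (max i j)
     let iE := I.orderEmbOfFin hI
     let jE := J.orderEmbOfFin hJ
     let α : Fin k → Fin n := fun m => min (iE m) (jE m)
     let β : Fin k → Fin n := fun m => max (iE m) (jE m)
     ((¬ (∀ m : Fin k, ∀ h : (m : ℕ) + 1 < k, β m < α ⟨(m : ℕ) + 1, h⟩) →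
        Matrix.det (X.submatrix iE jE) = 0) ∧
      ((∀ m : Fin k, ∀ h : (m : ℕ) + 1 < k, β m < α ⟨(m : ℕ) + 1, h⟩) →
        Matrix.det (X.submatrix iE jE) =
          ψ (α ⟨0, hk⟩) *
          (∏ m : Fin k, if h : (m : ℕ) + 1 < k then
              χ (β m) * ψ (α ⟨(m : ℕ) + 1, h⟩) - ψ (β m) * χ (α ⟨(m : ℕ) + 1, h⟩)
            else 1) *
          χ (β ⟨k - 1, by omega⟩)))) := by
  exact ⟨fun hfail => aux_zero ψ χ (I.orderEmbOfFin hI) (J.orderEmbOfFin hJ) hfail,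
         fun hcond => aux_main hk ψ χ (I.orderEmbOfFin hI) (J.orderEmbOfFin hJ) hcond⟩
end

section
/- Let x_1 < … < x_n be reals, m_1,…,m_n > 0, E_{jk} = exp(−|x_j − x_k|), and P = diag(m_1,…,m_n). Then det(PEP) = (∏_{j=1}^{n−1} (1 − E_{j,j+1}²)) · ∏_{j=1}^{n} m_j², and in particular det(PEP) > 0. -/
/-!
For nondecreasing points, `|x_j - x_n| = |x_j - x_{n-1}| + |x_{n-1} - x_n|` for `j < n`, so
`E_{n,j} = c E_{n-1,j}` with `c = E_{n-1,n}`. Subtracting `c` times row `n - 1` from row `n`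
leaves `1 - c²` as the only nonzero entry of the last row, and expanding along it gives
`det E = (1 - E_{n-1,n}²) · det (E restricted to x_1, …, x_{n-1})`.
Since `0 < E_{j,j+1} < 1` when the points are distinct, every factor is positive.
-/

open Matrix

namespace Matrix

theorem det_eq_mul_det_submatrix_castSucc_of_row_last {R : Type*} [CommRing R] {n : ℕ}
    (A : Matrix (Fin (n + 1)) (Fin (n + 1)) R) {i : Fin (n + 1)} (hi : i ≠ Fin.last n) (c : R)
    (hrow : ∀ j, j ≠ Fin.last n → A (Fin.last n) j = c * A i j) :
    A.det = (A (Fin.last n) (Fin.last n) - c * A i (Fin.last n)) *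
      (A.submatrix Fin.castSucc Fin.castSucc).det := by
  set B := A.updateRow (Fin.last n) (A (Fin.last n) + (-c) • A i)
  have hB_last : ∀ j, j ≠ Fin.last n → B (Fin.last n) j = 0 := fun j hj => by
    simp [B, hrow j hj]
  have hB_sub : B.submatrix Fin.castSucc Fin.castSucc = A.submatrix Fin.castSucc Fin.castSucc := by
    ext j k
    simp [B]
  rw [← det_updateRow_add_smul_self A hi.symm (-c), det_succ_row B (Fin.last n),
    Finset.sum_eq_single (Fin.last n) (fun j _ hj => by rw [hB_last j hj]; ring)
      (by simp), Fin.succAbove_last, hB_sub, ← two_mul, pow_mul]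
  simp [B, sub_eq_add_neg]

end Matrix

section Ematrix

variable {n : ℕ} {x : Fin n → ℝ}

theorem Ematrix_apply_pos (j k : Fin n) : 0 < Ematrix n x j k := Real.exp_pos _

theorem Ematrix_apply_lt_one {j k : Fin n} (h : x j ≠ x k) : Ematrix n x j k < 1 :=
  Real.exp_lt_one_iff.2 (neg_neg_of_pos (abs_pos.2 (sub_ne_zero.2 h)))

theorem Ematrix_apply_of_le {j k : Fin n} (h : x j ≤ x k) :
    Ematrix n x j k = Real.exp (x j - x k) := by
  rw [Ematrix, abs_of_nonpos (sub_nonpos.2 h), neg_neg]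

theorem Ematrix_apply_self (j : Fin n) : Ematrix n x j j = 1 := by
  simp [Ematrix]

theorem Ematrix_symm (j k : Fin n) : Ematrix n x j k = Ematrix n x k j := by
  rw [Ematrix, Ematrix, abs_sub_comm]

theorem Ematrix_submatrix_castSucc (x : Fin (n + 1) → ℝ) :
    (Ematrix (n + 1) x).submatrix Fin.castSucc Fin.castSucc = Ematrix n (x ∘ Fin.castSucc) :=
  rfl

theorem det_Ematrix_succ_succ {x : Fin (n + 2) → ℝ} (hx : Monotone x) :
    (Ematrix (n + 2) x).det =
      (1 - Ematrix (n + 2) x (Fin.last n).castSucc (Fin.last (n + 1)) ^ 2) *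
        (Ematrix (n + 1) (x ∘ Fin.castSucc)).det := by
  set p : Fin (n + 2) := (Fin.last n).castSucc
  have hp : p ≠ Fin.last (n + 1) := (Fin.castSucc_lt_last _).ne
  have hp_last : x p ≤ x (Fin.last (n + 1)) := hx (Fin.le_last _)
  have hrow : ∀ j, j ≠ Fin.last (n + 1) →
      Ematrix (n + 2) x (Fin.last (n + 1)) j =
        Ematrix (n + 2) x p (Fin.last (n + 1)) * Ematrix (n + 2) x p j := by
    intro j hj
    have hj_p : x j ≤ x p := hx (Fin.le_castSucc_iff.2 (Fin.lt_last_iff_ne_last.2 hj))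
    rw [Ematrix_symm, Ematrix_apply_of_le (hj_p.trans hp_last), Ematrix_apply_of_le hp_last,
      Ematrix_symm, Ematrix_apply_of_le hj_p, ← Real.exp_add]
    ring_nf
  rw [det_eq_mul_det_submatrix_castSucc_of_row_last _ hp _ hrow, Ematrix_submatrix_castSucc,
    Ematrix_apply_self, sq]

theorem det_Ematrix_succ {x : Fin (n + 1) → ℝ} (hx : Monotone x) :
    (Ematrix (n + 1) x).det = ∏ j : Fin n, (1 - Ematrix (n + 1) x j.castSucc j.succ ^ 2) := by
  induction n with
  | zero => simp [Ematrix]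
  | succ n ih =>
    rw [det_Ematrix_succ_succ hx, ih (hx.comp Fin.strictMono_castSucc.monotone),
      Fin.prod_univ_castSucc, mul_comm]
    simp only [Ematrix, Function.comp_apply, Fin.succ_castSucc, Fin.succ_last]

end Ematrix

/-- `det (PEP) = ∏_{j=1}^{n-1} (1 - E_{j,j+1}²) ∏_{j=1}^n m_j² > 0` for
`x_1 < … < x_n` and all `m_j > 0`. -/
theorem det_PEP (n : ℕ) (x : Fin n → ℝ) (hx : StrictMono x)
    (m : Fin n → ℝ) (hm : ∀ j, 0 < m j) :
    (Matrix.det (Matrix.diagonal m * Ematrix n x * Matrix.diagonal m) =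
      (∏ j : Fin (n - 1),
        (1 - (Ematrix n x ⟨(j : ℕ), by omega⟩ ⟨(j : ℕ) + 1, by omega⟩) ^ 2)) *
      ∏ j : Fin n, (m j) ^ 2) ∧
    0 < Matrix.det (Matrix.diagonal m * Ematrix n x * Matrix.diagonal m) := by
  have hE : (Ematrix n x).det = ∏ j : Fin (n - 1),
      (1 - (Ematrix n x ⟨(j : ℕ), by omega⟩ ⟨(j : ℕ) + 1, by omega⟩) ^ 2) := by
    cases n with
    | zero => simp
    | succ n => exact det_Ematrix_succ hx.monotone
  have hdet : Matrix.det (Matrix.diagonal m * Ematrix n x * Matrix.diagonal m) =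
      (∏ j : Fin (n - 1),
        (1 - (Ematrix n x ⟨(j : ℕ), by omega⟩ ⟨(j : ℕ) + 1, by omega⟩) ^ 2)) *
      ∏ j : Fin n, (m j) ^ 2 := by
    rw [det_mul, det_mul, det_diagonal, hE, Finset.prod_pow]
    ring
  refine ⟨hdet, hdet ▸ mul_pos (Finset.prod_pos fun j _ => ?_)
    (Finset.prod_pos fun j _ => pow_pos (hm j) 2)⟩
  exact sub_pos.2 (pow_lt_one₀ (Ematrix_apply_pos _ _).le
    (Ematrix_apply_lt_one (hx.injective.ne (by simp [Fin.ext_iff]))) two_ne_zero)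
end

section
/- Suppose W(λ) = Σ_{k=1}^n b_k/(λ − λ_k) and Z(λ) = 1/(γλ) + Σ_{k=1}^n c_k/(λ − λ_k) are rational functions with distinct nonzero poles λ_1,…,λ_n such that λ_j + λ_k ≠ 0 for all j,k, satisfying the identity Z(λ) + Z(−λ) + W(λ)W(−λ) = 0 for all λ where defined. Then c_k = Σ_{m=1}^n b_m b_k/(λ_m + λ_k) for each k. -/
/-!
Multiply the identity by `λ - λ_k` and let `λ → λ_k`. The terms `1/(γλ)` and `1/(-γλ)` cancel,
`(λ - λ_k) Z(λ) → c_k` and `(λ - λ_k) W(λ) → b_k`, while `Z(-λ)` and `W(-λ)` stay continuous at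
`λ_k` because `-λ_k` is not a pole. Hence `c_k = -b_k W(-λ_k) = Σ_m b_m b_k/(λ_m + λ_k)`.
-/

open Filter Topology

section PartialFractions

variable {𝕜 ι : Type*} [NontriviallyNormedField 𝕜] {lam : ι → 𝕜}

theorem continuousAt_sum_div_sub (d : ι → 𝕜) {s : Finset ι} {x₀ : 𝕜}
    (h : ∀ m ∈ s, x₀ ≠ lam m) : ContinuousAt (fun x => ∑ m ∈ s, d m / (x - lam m)) x₀ :=
  tendsto_finsetSum s fun m hm =>
    continuousAt_const.div (continuousAt_id.sub continuousAt_const) (sub_ne_zero.mpr (h m hm))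

variable [Fintype ι]

theorem tendsto_sub_mul_sum_div_sub (d : ι → 𝕜) (hlam : Function.Injective lam) (k : ι) :
    Tendsto (fun x => (x - lam k) * ∑ m, d m / (x - lam m)) (𝓝[≠] lam k) (𝓝 (d k)) := by
  classical
  set rest := fun x => ∑ m ∈ Finset.univ.erase k, d m / (x - lam m)
  have hsplit : ∀ x ≠ lam k,
      (x - lam k) * ∑ m, d m / (x - lam m) = d k + (x - lam k) * rest x := by
    intro x hx
    simp only [rest]
    rw [← Finset.add_sum_erase _ _ (Finset.mem_univ k)]
    field_simp [sub_ne_zero.mpr hx]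
  have hrest : ContinuousAt rest (lam k) :=
    continuousAt_sum_div_sub d fun m hm => hlam.ne (Finset.ne_of_mem_erase hm).symm
  have hcont : ContinuousAt (fun x => d k + (x - lam k) * rest x) (lam k) := by fun_prop
  have hlim : Tendsto (fun x => d k + (x - lam k) * rest x) (𝓝[≠] lam k) (𝓝 (d k)) := by
    simpa using hcont.tendsto.mono_left nhdsWithin_le_nhds
  exact hlim.congr' (eventually_nhdsWithin_of_forall fun x hx => (hsplit x hx).symm)

theorem tendsto_sub_mul_symmetrized (b c : ι → 𝕜) (hlam : Function.Injective lam) {k : ι}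
    (hrefl : ∀ m, -lam k ≠ lam m) :
    Tendsto (fun x => (x - lam k) * (∑ m, c m / (x - lam m) + ∑ m, c m / (-x - lam m) +
        (∑ m, b m / (x - lam m)) * ∑ m, b m / (-x - lam m)))
      (𝓝[≠] lam k) (𝓝 (c k + b k * ∑ m, b m / (-lam k - lam m))) := by
  have hneg : ∀ d : ι → 𝕜, ContinuousAt (fun x => ∑ m, d m / (-x - lam m)) (lam k) := fun d =>
    (continuousAt_sum_div_sub d fun m _ => hrefl m).comp continuousAt_neg
  have hvanish : Tendsto (fun x => x - lam k) (𝓝[≠] lam k) (𝓝 0) :=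
    tendsto_sub_nhds_zero_iff.mpr (tendsto_id.mono_left nhdsWithin_le_nhds)
  have hlim := ((tendsto_sub_mul_sum_div_sub c hlam k).add
    (hvanish.mul ((hneg c).tendsto.mono_left nhdsWithin_le_nhds))).add
      ((tendsto_sub_mul_sum_div_sub b hlam k).mul ((hneg b).tendsto.mono_left nhdsWithin_le_nhds))
  simp only [zero_mul, add_zero] at hlim
  exact hlim.congr fun x => by ring

end PartialFractions

theorem eventually_nhdsNE_forall_ne {X ι : Type*} [TopologicalSpace X] [T1Space X] [Finite ι]
    {lam : ι → X} (hlam : Function.Injective lam) (k : ι) :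
    ∀ᶠ x in 𝓝[≠] lam k, ∀ m, x ≠ lam m := by
  refine eventually_all.mpr fun m => ?_
  rcases eq_or_ne m k with rfl | hmk
  · exact self_mem_nhdsWithin
  · exact eventually_nhdsWithin_of_eventually_nhds (eventually_ne_nhds (hlam.ne hmk).symm)

theorem residues_from_ZW_identity_general (n : ℕ) (lam b c : Fin n → ℝ) (γ : ℝ)
    (hdist : Function.Injective lam) (h0 : ∀ k, lam k ≠ 0)
    (hsum : ∀ j k, lam j + lam k ≠ 0)
    (hident : ∀ x : ℝ, x ≠ 0 → (∀ k, x ≠ lam k) → (∀ k, -x ≠ lam k) →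
      ((1 / (γ * x) + ∑ k, c k / (x - lam k)) +
       (1 / (γ * (-x)) + ∑ k, c k / (-x - lam k)) +
       (∑ k, b k / (x - lam k)) * (∑ k, b k / (-x - lam k)) = 0)) :
    ∀ k, c k = ∑ m, b m * b k / (lam m + lam k) := by
  intro k
  have hrefl : ∀ m, -lam k ≠ lam m := fun m h => hsum m k (by linarith)
  have hgood : ∀ᶠ x in 𝓝[≠] lam k, x ≠ 0 ∧ (∀ m, x ≠ lam m) ∧ ∀ m, -x ≠ lam m :=
    (eventually_nhdsWithin_of_eventually_nhds (eventually_ne_nhds (h0 k))).and <|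
      (eventually_nhdsNE_forall_ne hdist k).and <| eventually_nhdsWithin_of_eventually_nhds <|
        eventually_all.mpr fun m => continuousAt_neg.eventually_ne (hrefl m)
  have hres : c k + b k * ∑ m, b m / (-lam k - lam m) = 0 := by
    refine tendsto_nhds_unique (tendsto_sub_mul_symmetrized b c hdist hrefl)
      (tendsto_const_nhds.congr' (hgood.mono fun x ⟨hx0, hx, hnx⟩ => ?_))
    have hpoles : 1 / (γ * x) + 1 / (γ * -x) = 0 := by
      rw [mul_neg, one_div_neg_eq_neg_one_div, add_neg_cancel]
    linear_combination (lam k - x) * (hident x hx0 hx hnx - hpoles)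
  calc c k = -(b k * ∑ m, b m / (-lam k - lam m)) := eq_neg_of_add_eq_zero_left hres
    _ = ∑ m, b m * b k / (lam m + lam k) := by
      rw [Finset.mul_sum, ← Finset.sum_neg_distrib]
      refine Finset.sum_congr rfl fun m _ => ?_
      rw [neg_sub_left, div_neg]
      ring

/-- If `W(λ) = Σ b_k/(λ - λ_k)` and `Z(λ) = 1/(γλ) + Σ c_k/(λ - λ_k)` satisfy
`Z(λ) + Z(-λ) + W(λ)W(-λ) = 0` wherever defined, then
`c_k = Σ_m b_m b_k/(λ_m + λ_k)`. -/
theorem residues_from_ZW_identity (n : ℕ) (lam b c : Fin n → ℝ) (γ : ℝ) (hγ : γ ≠ 0)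
    (hdist : Function.Injective lam) (h0 : ∀ k, lam k ≠ 0)
    (hsum : ∀ j k, lam j + lam k ≠ 0)
    (hident : ∀ x : ℝ, x ≠ 0 → (∀ k, x ≠ lam k) → (∀ k, -x ≠ lam k) →
      ((1 / (γ * x) + ∑ k, c k / (x - lam k)) +
       (1 / (γ * (-x)) + ∑ k, c k / (-x - lam k)) +
       (∑ k, b k / (x - lam k)) * (∑ k, b k / (-x - lam k)) = 0)) :
    ∀ k, c k = ∑ m, b m * b k / (lam m + lam k) :=
  residues_from_ZW_identity_general n lam b c γ hdist h0 hsum hident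
end

section
/- Let n = 2, with x_1 < x_2 real and m_1, m_2 real. Set E_{12} = e^{−(x_2−x_1)}. Define H_1 = m_1² + m_2² + 2m_1m_2E_{12} and H_2 = (1 − E_{12}²) m_1² m_2². If (x_1, x_2, m_1, m_2) solve the ODEs ẋ_k = u(x_k)², ṁ_k = −m_k u(x_k)⟨u_x(x_k)⟩ where u(x) = m_1 e^{−|x−x_1|} + m_2 e^{−|x−x_2|} and ⟨u_x(x_k)⟩ is the average of left and right derivatives, then dH_1/dt = 0 and dH_2/dt = 0. -/
/-!
The positions enter `H₁` and `H₂` only through `E = exp (x₁ - x₂)`, and along the flow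
`Ė = E (1 - E²) (m₁² - m₂²)`. Both constants are conserved already by the closed system in
`(m₁, m₂, E)`, where the vanishing of their derivatives is a polynomial identity.
-/

open Real

section ReducedFlow

variable {m1 m2 E : ℝ → ℝ} {t : ℝ}

theorem hasDerivAt_peakon_H1_eq_zero
    (hm1 : HasDerivAt m1 (-(m1 t * (m1 t + m2 t * E t) * (m2 t * E t))) t)
    (hm2 : HasDerivAt m2 (m2 t * (m1 t * E t + m2 t) * (m1 t * E t)) t)
    (hE : HasDerivAt E (E t * (1 - E t ^ 2) * (m1 t ^ 2 - m2 t ^ 2)) t) :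
    HasDerivAt (fun t => m1 t ^ 2 + m2 t ^ 2 + 2 * m1 t * m2 t * E t) 0 t := by
  refine (((hm1.pow 2).add (hm2.pow 2)).add
    ((((hasDerivAt_const t (2 : ℝ)).mul hm1).mul hm2).mul hE)).congr_deriv ?_
  simp only [Pi.mul_apply]
  ring

theorem hasDerivAt_peakon_H2_eq_zero
    (hm1 : HasDerivAt m1 (-(m1 t * (m1 t + m2 t * E t) * (m2 t * E t))) t)
    (hm2 : HasDerivAt m2 (m2 t * (m1 t * E t + m2 t) * (m1 t * E t)) t)
    (hE : HasDerivAt E (E t * (1 - E t ^ 2) * (m1 t ^ 2 - m2 t ^ 2)) t) :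
    HasDerivAt (fun t => (1 - E t ^ 2) * m1 t ^ 2 * m2 t ^ 2) 0 t := by
  refine ((((hasDerivAt_const t (1 : ℝ)).sub (hE.pow 2)).mul (hm1.pow 2)).mul
    (hm2.pow 2)).congr_deriv ?_
  simp only [Pi.pow_apply, Pi.mul_apply, Pi.sub_apply]
  ring

end ReducedFlow

theorem hasDerivAt_exp_sub_of_peakon_flow {x1 x2 m1 m2 : ℝ → ℝ} {t : ℝ}
    (hx1 : HasDerivAt x1 ((m1 t + m2 t * exp (x1 t - x2 t)) ^ 2) t)
    (hx2 : HasDerivAt x2 ((m1 t * exp (x1 t - x2 t) + m2 t) ^ 2) t) :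
    HasDerivAt (fun t => exp (x1 t - x2 t))
      (exp (x1 t - x2 t) * (1 - exp (x1 t - x2 t) ^ 2) * (m1 t ^ 2 - m2 t ^ 2)) t := by
  refine ((hx1.sub hx2).exp).congr_deriv ?_
  rw [Pi.sub_apply]
  ring

theorem two_peakon_constants_of_motion_general
    (x1 x2 m1 m2 : ℝ → ℝ)
    (hx1 : ∀ t, HasDerivAt x1 ((m1 t + m2 t * Real.exp (x1 t - x2 t)) ^ 2) t)
    (hx2 : ∀ t, HasDerivAt x2 ((m1 t * Real.exp (x1 t - x2 t) + m2 t) ^ 2) t)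
    (hm1 : ∀ t, HasDerivAt m1
      (-(m1 t * (m1 t + m2 t * Real.exp (x1 t - x2 t)) *
         (m2 t * Real.exp (x1 t - x2 t)))) t)
    (hm2 : ∀ t, HasDerivAt m2
      (m2 t * (m1 t * Real.exp (x1 t - x2 t) + m2 t) *
        (m1 t * Real.exp (x1 t - x2 t))) t) :
    (∀ t, HasDerivAt (fun t =>
      (m1 t) ^ 2 + (m2 t) ^ 2 + 2 * m1 t * m2 t * Real.exp (x1 t - x2 t)) 0 t) ∧
    (∀ t, HasDerivAt (fun t =>
      (1 - (Real.exp (x1 t - x2 t)) ^ 2) * (m1 t) ^ 2 * (m2 t) ^ 2) 0 t) := by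
  have hE t := hasDerivAt_exp_sub_of_peakon_flow (hx1 t) (hx2 t)
  exact ⟨fun t => hasDerivAt_peakon_H1_eq_zero (hm1 t) (hm2 t) (hE t),
    fun t => hasDerivAt_peakon_H2_eq_zero (hm1 t) (hm2 t) (hE t)⟩

/-- The quantities `H₁ = m₁² + m₂² + 2m₁m₂E₁₂` and `H₂ = (1 - E₁₂²)m₁²m₂²` are conserved
along the two-peakon flow of Novikov's equation. -/
theorem two_peakon_constants_of_motion
    (x1 x2 m1 m2 : ℝ → ℝ)
    (hord : ∀ t, x1 t < x2 t)
    (hx1 : ∀ t, HasDerivAt x1 ((m1 t + m2 t * Real.exp (x1 t - x2 t)) ^ 2) t)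
    (hx2 : ∀ t, HasDerivAt x2 ((m1 t * Real.exp (x1 t - x2 t) + m2 t) ^ 2) t)
    (hm1 : ∀ t, HasDerivAt m1
      (-(m1 t * (m1 t + m2 t * Real.exp (x1 t - x2 t)) *
         (m2 t * Real.exp (x1 t - x2 t)))) t)
    (hm2 : ∀ t, HasDerivAt m2
      (m2 t * (m1 t * Real.exp (x1 t - x2 t) + m2 t) *
        (m1 t * Real.exp (x1 t - x2 t))) t) :
    (∀ t, HasDerivAt (fun t =>
      (m1 t) ^ 2 + (m2 t) ^ 2 + 2 * m1 t * m2 t * Real.exp (x1 t - x2 t)) 0 t) ∧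
    (∀ t, HasDerivAt (fun t =>
      (1 - (Real.exp (x1 t - x2 t)) ^ 2) * (m1 t) ^ 2 * (m2 t) ^ 2) 0 t) :=
  two_peakon_constants_of_motion_general x1 x2 m1 m2 hx1 hx2 hm1 hm2
end
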